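/- arXiv:2512.16653 — 10 statements merged into one kernel-verified Lean document; each statement's English description precedes it below -/
import Mathlib

section
/- Let H be an RSHCD of order n = 4u² with row sum a = 2u, diagonal e, and type ε (so ae = ε√n). Then A = (1/2)(J - eH) is the adjacency matrix of a strongly regular graph with parameters (4u², 2u² - εu, u² - εu, u² - εu), i.e., a (v,k,λ)-graph. -/
open Matrix Finset

/-- If `H` is an RSHCD of order `4u²` with row sum `2u`, diagonal `e` and type
`ε` (so that `(2u)·e = ε·√(4u²) = ε·2u`), then `A = ½(J - eH)` is the adjacency matrix of a
strongly regular graph with parameters `(4u², 2u² - εu, u² - εu, u² - εu)`, i.e. a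
`(v,k,λ)`-graph: `A` is a symmetric 0-1 matrix with zero diagonal satisfying
`A² = (k-λ)I + λJ` and `AJ = kJ`. -/
theorem rshcd_gives_vkl_graph (u : ℕ) (hu : 1 ≤ u) (ε e : ℤ)
    (hε : ε = 1 ∨ ε = -1) (he : e = 1 ∨ e = -1)
    (H : Matrix (Fin (4 * u ^ 2)) (Fin (4 * u ^ 2)) ℤ)
    (hent : ∀ i j, H i j = 1 ∨ H i j = -1)
    (hsymm : H.IsSymm)
    (hHad : H * H = ((4 * u ^ 2 : ℕ) : ℤ) • (1 : Matrix (Fin (4 * u ^ 2)) (Fin (4 * u ^ 2)) ℤ))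
    (hdiag : ∀ i, H i i = e)
    (hrow : ∀ i, ∑ j, H i j = 2 * (u : ℤ))
    (htype : (2 * (u : ℤ)) * e = ε * (2 * (u : ℤ)))
    (A : Matrix (Fin (4 * u ^ 2)) (Fin (4 * u ^ 2)) ℤ)
    (hA : (2 : ℤ) • A = (Matrix.of fun _ _ => (1 : ℤ)) - e • H) :
    (∀ i j, A i j = 0 ∨ A i j = 1) ∧ A.IsSymm ∧ (∀ i, A i i = 0) ∧
    A * A = ((2 * (u : ℤ) ^ 2 - ε * u) - ((u : ℤ) ^ 2 - ε * u)) • 1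
        + ((u : ℤ) ^ 2 - ε * u) • (Matrix.of fun _ _ => (1 : ℤ)) ∧
    A * (Matrix.of fun _ _ => (1 : ℤ))
        = (2 * (u : ℤ) ^ 2 - ε * u) • (Matrix.of fun _ _ => (1 : ℤ)) := by

  have hu' : (1 : ℤ) ≤ (u : ℤ) := by exact_mod_cast hu
  have hεe : ε = e := by
    rcases hε with rfl | rfl <;> rcases he with rfl | rfl <;> linarith
  have hee : e * e = 1 := by rcases he with rfl | rfl <;> ring
  have hA' : ∀ i j, 2 * A i j = 1 - e * H i j := by
    intro i j
    have := congrFun (congrFun hA i) j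
    simp only [Matrix.smul_apply, Matrix.sub_apply, Matrix.of_apply, smul_eq_mul] at this
    linarith
  have hHsym : ∀ i j, H j i = H i j := fun i j => hsymm.apply i j
  have hcol : ∀ j, ∑ k, H k j = 2 * (u : ℤ) := by
    intro j
    calc ∑ k, H k j = ∑ k, H j k := by simp_rw [hHsym]
    _ = 2 * (u : ℤ) := hrow j
  have hHH : ∀ i j, ∑ k, H i k * H k j = (4 * (u : ℤ) ^ 2) * (if i = j then 1 else 0) := by
    intro i j
    have := congrFun (congrFun hHad i) j
    simp only [mul_apply, Matrix.smul_apply, Matrix.one_apply, smul_eq_mul] at this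
    rw [this]
    push_cast
    ring_nf
  refine ⟨?_, ?_, ?_, ?_, ?_⟩
  · intro i j
    have h := hA' i j
    rcases hent i j with h1 | h1 <;> rcases he with rfl | rfl <;> rw [h1] at h <;> omega
  · ext i j
    have h1 := hA' i j
    have h2 := hA' j i
    rw [hHsym i j] at h2
    simp only [Matrix.transpose_apply]
    linarith
  · intro i
    have h := hA' i i
    rw [hdiag i, hee] at h
    linarith
  · ext i j
    have e2 : 4 * ((A * A) i j) = ∑ k, (1 - e * H i k) * (1 - e * H k j) := by
      rw [mul_apply, Finset.mul_sum]
      refine Finset.sum_congr rfl fun k _ => ?_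
      rw [← hA' i k, ← hA' k j]; ring
    have e3 : ∑ k, (1 - e * H i k) * (1 - e * H k j)
        = ((Finset.univ : Finset (Fin (4 * u ^ 2))).card : ℤ) - e * (∑ k, H i k) - e * (∑ k, H k j)
          + (e * e) * (∑ k, H i k * H k j) := by
      have : ∀ k, (1 - e * H i k) * (1 - e * H k j)
          = 1 - e * H i k - e * H k j + (e * e) * (H i k * H k j) := fun k => by ring
      simp_rw [this]
      rw [Finset.sum_add_distrib, Finset.sum_sub_distrib, Finset.sum_sub_distrib,
        ← Finset.mul_sum, ← Finset.mul_sum, ← Finset.mul_sum, Finset.sum_const,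
        nsmul_eq_mul, mul_one]
    rw [e3, hrow i, hcol j, hHH i j, hee, Finset.card_univ, Fintype.card_fin] at e2
    push_cast at e2
    simp only [Matrix.add_apply, Matrix.smul_apply, Matrix.one_apply, Matrix.of_apply,
      smul_eq_mul, mul_one]
    rw [hεe]
    by_cases hij : i = j
    · simp only [if_pos hij] at e2 ⊢; linarith
    · simp only [if_neg hij] at e2 ⊢; linarith
  · ext i j
    simp only [mul_apply, Matrix.of_apply, Matrix.smul_apply, smul_eq_mul, mul_one]
    have e2 : 2 * (∑ k, A i k) = ∑ k, (1 - e * H i k) := by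
      rw [Finset.mul_sum]
      exact Finset.sum_congr rfl fun k _ => hA' i k
    have e3 : ∑ k, (1 - e * H i k)
        = ((Finset.univ : Finset (Fin (4 * u ^ 2))).card : ℤ) - e * (∑ k, H i k) := by
      rw [Finset.sum_sub_distrib, Finset.mul_sum]
      simp
    rw [e3, hrow i, Finset.card_univ, Fintype.card_fin] at e2
    push_cast at e2
    rw [hεe]
    linarith
end

section
/- Let Q be a symmetric weighing matrix of order m and weight w with no diagonal entry equal to 1, and let R be a symmetric (0,1,2)-matrix with R ≡ Q (mod 2), no diagonal entry equal to 2, and R² = αI + βJ for integers α, β with β even. Then the matrix A = (1/2)[[R+Q, R−Q],[R−Q, R+Q]] is a symmetric 0-1 matrix with zero diagonal satisfying A² = (k−λ₂)I_{2m} + (λ₂)J_{2m} + (λ₁−λ₂)(I_m ⊗ J_2-blocks structure), where k = √(α+mβ), λ₁ = k − w, λ₂ = β/2; in particular A is the adjacency matrix of a divisible design graph with parameters (2m, k, λ₁, λ₂, m, 2). -/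
open Matrix Finset

/-- Given a symmetric weighing matrix `Q` of order `m` and weight `w` with no
diagonal entry `1`, and a symmetric `(0,1,2)`-matrix `R` with `R ≡ Q (mod 2)`, no diagonal
entry `2`, and `R² = αI + βJ` with `β` even, the matrix `A = ½[[R+Q, R−Q],[R−Q, R+Q]]` is the
adjacency matrix of a divisible design graph with parameters
`(2m, k, λ₁, λ₂, m, 2)`, where `k = √(α + mβ)`, `λ₁ = k − w`, `λ₂ = β/2`, and the classes are
the pairs `{i, i+m}` (encoded by the matrix `P = fromBlocks 1 1 1 1`). -/
theorem thin_ddg_from_RQ (m : ℕ) (w α β k lam1 lam2 : ℤ)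
    (Q R : Matrix (Fin m) (Fin m) ℤ)
    (hQsymm : Q.IsSymm)
    (hQent : ∀ i j, Q i j = 0 ∨ Q i j = 1 ∨ Q i j = -1)
    (hQw : Q * Q.transpose = w • (1 : Matrix (Fin m) (Fin m) ℤ))
    (hQdiag : ∀ i, Q i i ≠ 1)
    (hRsymm : R.IsSymm)
    (hRent : ∀ i j, R i j = 0 ∨ R i j = 1 ∨ R i j = 2)
    (hRQ : ∀ i j, (2 : ℤ) ∣ R i j - Q i j)
    (hRdiag : ∀ i, R i i ≠ 2)
    (hR2 : R * R = α • (1 : Matrix (Fin m) (Fin m) ℤ) + β • (Matrix.of fun _ _ => (1 : ℤ)))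
    (hβ : Even β)
    (hk : k ^ 2 = α + m * β) (hk0 : 0 ≤ k)
    (hlam1 : lam1 = k - w) (hlam2 : 2 * lam2 = β)
    (A : Matrix (Fin m ⊕ Fin m) (Fin m ⊕ Fin m) ℤ)
    (hA : (2 : ℤ) • A = Matrix.fromBlocks (R + Q) (R - Q) (R - Q) (R + Q)) :
    (∀ p q, A p q = 0 ∨ A p q = 1) ∧ A.IsSymm ∧ (∀ p, A p p = 0) ∧
    A * (Matrix.of fun _ _ => (1 : ℤ)) = k • (Matrix.of fun _ _ => (1 : ℤ)) ∧
    A * A = k • (1 : Matrix (Fin m ⊕ Fin m) (Fin m ⊕ Fin m) ℤ)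
        + lam1 • (Matrix.fromBlocks (1 : Matrix (Fin m) (Fin m) ℤ) 1 1 1 - 1)
        + lam2 • ((Matrix.of fun _ _ => (1 : ℤ))
            - Matrix.fromBlocks (1 : Matrix (Fin m) (Fin m) ℤ) 1 1 1) := by
  have hRs : ∀ i j, R j i = R i j := fun i j => hRsymm.apply i j
  have hQs : ∀ i j, Q j i = Q i j := fun i j => hQsymm.apply i j
  have hQQ : Q * Q = w • (1 : Matrix (Fin m) (Fin m) ℤ) := by
    rw [← hQw, hQsymm.eq]
  have hRRe : ∀ i j, (∑ t, R i t * R t j) = (if i = j then α else 0) + β := by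
    intro i j
    have h := congrFun (congrFun hR2 i) j
    simp only [Matrix.add_apply, Matrix.smul_apply, smul_eq_mul, Matrix.of_apply,
      Matrix.mul_apply, Matrix.one_apply, mul_ite, mul_one, mul_zero] at h
    exact h
  have hQQe : ∀ i j, (∑ t, Q i t * Q t j) = if i = j then w else 0 := by
    intro i j
    have h := congrFun (congrFun hQQ i) j
    simpa [Matrix.mul_apply, Matrix.one_apply, mul_ite, mul_one, mul_zero] using h
  have hRpos : ∀ i j, 0 ≤ R i j := by
    intro i j; rcases hRent i j with h|h|h <;> omega
  have ent : ∀ i j, (R i j + Q i j = 0 ∨ R i j + Q i j = 2) ∧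
      (R i j - Q i j = 0 ∨ R i j - Q i j = 2) ∧
      R i j * R i j + Q i j * Q i j = 2 * R i j := by
    intro i j
    have h2 := hRQ i j
    rcases hQent i j with h|h|h <;> rcases hRent i j with h'|h'|h' <;> rw [h, h'] at h2 ⊢ <;>
      (revert h2; norm_num)
  -- row sums of R equal k
  have hs : ∀ i, (∑ j, R i j) = k := by
    intro i
    have hsnn : 0 ≤ ∑ j, R i j := Finset.sum_nonneg fun j _ => hRpos i j
    have hsq : (∑ j, R i j) * (∑ j, R i j) = k * k := by
      by_cases hb : β = 0
      · have horth : ∀ j j', j ≠ j' → R i j * R i j' = 0 := by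
          intro j j' hjj
          have hz : (∑ t, R j t * R t j') = 0 := by
            rw [hRRe]; simp [hjj, hb]
          have hterm := (Finset.sum_eq_zero_iff_of_nonneg
            (fun t _ => mul_nonneg (hRpos j t) (hRpos t j'))).mp hz i (Finset.mem_univ i)
          rw [hRs i j] at hterm
          exact hterm
        have h1 : (∑ j, R i j) * (∑ j, R i j) = ∑ j, R i j * R i j := by
          rw [Finset.sum_mul_sum]
          refine Finset.sum_congr rfl fun j _ => ?_
          exact Finset.sum_eq_single_of_mem j (Finset.mem_univ j)
            (fun j' _ hj' => horth j j' fun e => hj' e.symm)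
        have h2 : ∑ j, R i j * R i j = ∑ t, R i t * R t i := by
          refine Finset.sum_congr rfl fun t _ => ?_
          rw [hRs i t]
        rw [h1, h2, hRRe i i]
        rw [hb] at hk ⊢
        rw [if_pos rfl, add_zero]
        linear_combination -hk
      · -- β ≠ 0 : row sums are constant
        have hcomm : R * (R * R) = (R * R) * R := (mul_assoc R R R).symm
        rw [hR2] at hcomm
        rw [Matrix.mul_add, Matrix.add_mul] at hcomm
        rw [Matrix.mul_smul, Matrix.smul_mul, Matrix.mul_one, Matrix.one_mul,
          Matrix.mul_smul, Matrix.smul_mul] at hcomm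
        have hJ : R * (Matrix.of fun _ _ => (1:ℤ)) = (Matrix.of fun _ _ => (1:ℤ)) * R := by
          have h := add_left_cancel hcomm
          exact smul_right_injective _ hb h
        have hconst : ∀ j, (∑ t, R j t) = ∑ t, R i t := by
          intro j
          have h := congrFun (congrFun hJ i) j
          simp only [Matrix.mul_apply, Matrix.of_apply, mul_one, one_mul] at h
          rw [h]
          refine Finset.sum_congr rfl fun t _ => hRs t j
        have hkk : k * k = ∑ j, ((if i = j then α else 0) + β) := by
          rw [Finset.sum_add_distrib, Finset.sum_ite_eq, Finset.sum_const]
          simp only [Finset.mem_univ, if_pos, Finset.card_univ, Fintype.card_fin,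
            nsmul_eq_mul]
          rw [← hk]; ring
        rw [hkk]
        have h3 : ∑ j, ((if i = j then α else 0) + β) = ∑ j, ∑ t, R i t * R t j := by
          refine Finset.sum_congr rfl fun j _ => (hRRe i j).symm
        rw [h3, Finset.sum_comm]
        have h4 : ∀ t, (∑ j, R i t * R t j) = R i t * ∑ j, R i j := by
          intro t
          rw [← Finset.mul_sum, hconst t]
        rw [Finset.sum_congr rfl fun t _ => h4 t, ← Finset.sum_mul]
    rcases mul_self_eq_mul_self_iff.mp hsq with h | h
    · exact h
    · have h0 : k = 0 := by linarith
      rw [h, h0]; ring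
  have h2A : ∀ p q, 2 * A p q =
      Matrix.fromBlocks (R + Q) (R - Q) (R - Q) (R + Q) p q := by
    intro p q
    have := congrFun (congrFun hA p) q
    simpa using this
  -- entries
  have hent : ∀ p q, A p q = 0 ∨ A p q = 1 := by
    intro p q
    have h := h2A p q
    rcases p with i|i <;> rcases q with j|j <;>
      simp only [Matrix.fromBlocks_apply₁₁, Matrix.fromBlocks_apply₁₂,
        Matrix.fromBlocks_apply₂₁, Matrix.fromBlocks_apply₂₂,
        Matrix.add_apply, Matrix.sub_apply] at h <;>
      obtain ⟨e1, e2, -⟩ := ent i j <;> omega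
  -- symmetry
  have hsymm : A.IsSymm := by
    refine Matrix.IsSymm.ext fun p q => ?_
    have h1 := h2A p q
    have h2 := h2A q p
    rcases p with i|i <;> rcases q with j|j <;>
      simp only [Matrix.fromBlocks_apply₁₁, Matrix.fromBlocks_apply₁₂,
        Matrix.fromBlocks_apply₂₁, Matrix.fromBlocks_apply₂₂,
        Matrix.add_apply, Matrix.sub_apply] at h1 h2 <;>
      rw [hRs i j, hQs i j] at h2 <;> omega
  -- zero diagonal
  have hdiag0 : ∀ i, R i i + Q i i = 0 := by
    intro i
    have hq := hQent i i
    have hr := hRent i i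
    have hd := hRQ i i
    have h1 := hQdiag i
    have h2 := hRdiag i
    omega
  have hdiag : ∀ p, A p p = 0 := by
    intro p
    rcases p with i|i <;>
      [have h := h2A (Sum.inl i) (Sum.inl i); have h := h2A (Sum.inr i) (Sum.inr i)] <;>
      simp only [Matrix.fromBlocks_apply₁₁, Matrix.fromBlocks_apply₂₂,
        Matrix.add_apply] at h <;>
      have h0 := hdiag0 i <;> omega
  -- row sums of A
  have hArow : ∀ p, (∑ q, A p q) = k := by
    intro p
    have h : 2 * ∑ q, A p q = 2 * k := by
      rw [Finset.mul_sum]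
      rw [Finset.sum_congr rfl fun q _ => h2A p q]
      rcases p with i|i <;>
        simp only [Fintype.sum_sum_type, Matrix.fromBlocks_apply₁₁,
          Matrix.fromBlocks_apply₁₂, Matrix.fromBlocks_apply₂₁, Matrix.fromBlocks_apply₂₂,
          Matrix.add_apply, Matrix.sub_apply, Finset.sum_add_distrib,
          Finset.sum_sub_distrib] <;>
        rw [hs i] <;> ring
    linarith
  refine ⟨hent, hsymm, hdiag, ?_, ?_⟩
  · ext p q
    simp only [Matrix.mul_apply, Matrix.of_apply, Matrix.smul_apply, smul_eq_mul, mul_one]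
    exact hArow p
  · -- the identity α + β + w = 2k (valid when m > 0)
    have hsum4 : ∀ _ : Fin m, α + β + w = 2 * k := by
      intro i0
      have t1 : (∑ i, ∑ j, R i j * R i j) = m * (α + β) := by
        have h1 : ∀ i : Fin m, (∑ j, R i j * R i j) = α + β := by
          intro i
          have h2 : (∑ j, R i j * R i j) = ∑ t, R i t * R t i :=
            Finset.sum_congr rfl fun t _ => by rw [hRs i t]
          rw [h2, hRRe i i]; simp
        rw [Finset.sum_congr rfl fun i _ => h1 i, Finset.sum_const]
        simp only [Finset.card_univ, Fintype.card_fin, nsmul_eq_mul]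
      have t2 : (∑ i, ∑ j, Q i j * Q i j) = m * w := by
        have h1 : ∀ i : Fin m, (∑ j, Q i j * Q i j) = w := by
          intro i
          have h2 : (∑ j, Q i j * Q i j) = ∑ t, Q i t * Q t i :=
            Finset.sum_congr rfl fun t _ => by rw [hQs i t]
          rw [h2, hQQe i i]; simp
        rw [Finset.sum_congr rfl fun i _ => h1 i, Finset.sum_const]
        simp only [Finset.card_univ, Fintype.card_fin, nsmul_eq_mul]
      have t3 : (∑ i : Fin m, ∑ j, (R i j * R i j + Q i j * Q i j)) = m * (2 * k) := by
        have h1 : ∀ i : Fin m, (∑ j, (R i j * R i j + Q i j * Q i j)) = 2 * k := by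
          intro i
          rw [Finset.sum_congr rfl fun j _ => (ent i j).2.2, ← Finset.mul_sum, hs i]
        rw [Finset.sum_congr rfl fun i _ => h1 i, Finset.sum_const]
        simp only [Finset.card_univ, Fintype.card_fin, nsmul_eq_mul]
      have t4 : (∑ i : Fin m, ∑ j, (R i j * R i j + Q i j * Q i j)) =
          (∑ i, ∑ j, R i j * R i j) + ∑ i, ∑ j, Q i j * Q i j := by
        rw [← Finset.sum_add_distrib]
        exact Finset.sum_congr rfl fun i _ => by rw [← Finset.sum_add_distrib]
      have hm : (m : ℤ) ≠ 0 := by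
        have h := i0.pos
        omega
      have h5 : (m:ℤ) * (α + β + w) = (m:ℤ) * (2 * k) := by
        rw [t4, t1, t2] at t3
        linarith
      exact mul_left_cancel₀ hm h5
    have key1 : ∀ i j : Fin m,
        ((∑ t, (R i t + Q i t) * (R t j + Q t j)) +
         (∑ t, (R i t - Q i t) * (R t j - Q t j))) =
        2 * ((if i = j then α else 0) + β) + 2 * (if i = j then w else 0) := by
      intro i j
      rw [← Finset.sum_add_distrib,
        Finset.sum_congr rfl fun t _ =>
          (by ring : (R i t + Q i t) * (R t j + Q t j) +
            (R i t - Q i t) * (R t j - Q t j) =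
            2 * (R i t * R t j) + 2 * (Q i t * Q t j)),
        Finset.sum_add_distrib, ← Finset.mul_sum, ← Finset.mul_sum, hRRe, hQQe]
    have key2 : ∀ i j : Fin m,
        ((∑ t, (R i t + Q i t) * (R t j - Q t j)) +
         (∑ t, (R i t - Q i t) * (R t j + Q t j))) =
        2 * ((if i = j then α else 0) + β) - 2 * (if i = j then w else 0) := by
      intro i j
      rw [← Finset.sum_add_distrib,
        Finset.sum_congr rfl fun t _ =>
          (by ring : (R i t + Q i t) * (R t j - Q t j) +
            (R i t - Q i t) * (R t j + Q t j) =
            2 * (R i t * R t j) - 2 * (Q i t * Q t j)),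
        Finset.sum_sub_distrib, ← Finset.mul_sum, ← Finset.mul_sum, hRRe, hQQe]
    ext p q
    have e : 4 * (A * A) p q =
        (Matrix.fromBlocks (R + Q) (R - Q) (R - Q) (R + Q) *
         Matrix.fromBlocks (R + Q) (R - Q) (R - Q) (R + Q)) p q := by
      rw [← hA]
      simp only [Matrix.mul_apply, Matrix.smul_apply, smul_eq_mul, Finset.mul_sum]
      exact Finset.sum_congr rfl fun r _ => by ring
    rcases p with i|i <;> rcases q with j|j <;>
      simp only [Matrix.mul_apply, Fintype.sum_sum_type, Matrix.fromBlocks_apply₁₁,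
        Matrix.fromBlocks_apply₁₂, Matrix.fromBlocks_apply₂₁, Matrix.fromBlocks_apply₂₂,
        Matrix.add_apply, Matrix.sub_apply] at e <;>
      simp only [Matrix.add_apply, Matrix.sub_apply, Matrix.smul_apply, smul_eq_mul,
        Matrix.one_apply, Matrix.of_apply, Matrix.fromBlocks_apply₁₁,
        Matrix.fromBlocks_apply₁₂, Matrix.fromBlocks_apply₂₁, Matrix.fromBlocks_apply₂₂,
        Sum.inl.injEq, Sum.inr.injEq, reduceCtorEq, if_false]
    · have key := key1 i j
      simp only [Matrix.mul_apply, Fintype.sum_sum_type]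
      by_cases hij : i = j <;> simp [hij] at e key ⊢ <;> linarith [hsum4 i]
    · have key := key2 i j
      simp only [Matrix.mul_apply, Fintype.sum_sum_type]
      by_cases hij : i = j <;> simp [hij] at e key ⊢ <;> linarith [hsum4 i]
    · have key := key2 i j
      simp only [Matrix.mul_apply, Fintype.sum_sum_type]
      by_cases hij : i = j <;> simp [hij] at e key ⊢ <;> linarith [hsum4 i]
    · have key := key1 i j
      simp only [Matrix.mul_apply, Fintype.sum_sum_type]
      by_cases hij : i = j <;> simp [hij] at e key ⊢ <;> linarith [hsum4 i]
end

section
/- If a (v,k,λ)-graph Γ admits a fixed-point free automorphism of order 2, then the partition of the vertex set into the orbits of the involution is equitable; consequently Γ is a thin divisible design graph with classes of size 2. -/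
open Finset

/-- If a `(v,k,λ)`-graph admits a fixed-point free involution `σ`, then the
partition of the vertex set into the orbits `{x, σ x}` is equitable (every vertex of a cell
has the same number of neighbours in any given cell); consequently the graph is a thin
divisible design graph whose classes `{x, σ x}` have size 2 (with `λ₁ = λ₂ = λ`). -/
theorem vkl_graph_involution_equitable {V : Type*} [Fintype V] [DecidableEq V]
    (G : SimpleGraph V) [DecidableRel G.Adj] (k lam : ℕ)
    (hreg : ∀ x, G.degree x = k)
    (hlam : ∀ x y, x ≠ y → (G.neighborFinset x ∩ G.neighborFinset y).card = lam)
    (σ : G ≃g G) (hinv : ∀ x, σ (σ x) = x) (hfpf : ∀ x, σ x ≠ x) :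
    (∀ x y : V, ((G.neighborFinset x).filter (fun z => z = y ∨ z = σ y)).card =
      ((G.neighborFinset (σ x)).filter (fun z => z = y ∨ z = σ y)).card) ∧
    (∀ x : V, ({x, σ x} : Finset V).card = 2) ∧
    (∀ x y, x ≠ y → y = σ x → (G.neighborFinset x ∩ G.neighborFinset y).card = lam) ∧
    (∀ x y, x ≠ y → y ≠ σ x → (G.neighborFinset x ∩ G.neighborFinset y).card = lam) := by
  refine ⟨?_, ?_, fun x y h _ => hlam x y h, fun x y h _ => hlam x y h⟩
  · intro x y
    apply Finset.card_bij (fun z _ => σ z)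
    · intro z hz
      simp only [mem_filter, SimpleGraph.mem_neighborFinset] at hz ⊢
      refine ⟨σ.map_adj_iff.mpr hz.1, ?_⟩
      rcases hz.2 with h | h
      · right; rw [h]
      · left; rw [h, hinv]
    · intro a ha b hb hab
      exact σ.injective hab
    · intro w hw
      simp only [mem_filter, SimpleGraph.mem_neighborFinset] at hw ⊢
      refine ⟨σ w, ⟨?_, ?_⟩, hinv w⟩
      · have := σ.map_adj_iff.mpr hw.1
        simpa [hinv] using this
      · rcases hw.2 with h | h
        · right; rw [h]
        · left; rw [h, hinv]
  · intro x
    rw [Finset.card_insert_of_notMem (by simpa using (hfpf x).symm), card_singleton]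
end

section
/- Let t ≥ 2, u ≥ 1, and let H₁,…,H_t be RSHCDs of order 4u², type ε, each with all diagonal entries −1. Let R be the block matrix of order 4tu² whose off-diagonal blocks are all-ones matrices J of order 4u² and whose i-th diagonal block is H_i + J. Then R is a symmetric (0,1,2)-matrix with no 2 on the main diagonal, and R² = 4u²·I + (4tu² − 4εu)·J. -/
open Matrix Finset

/-- Let `t ≥ 2`, `u ≥ 1`, and let `H₁, …, H_t` be RSHCDs of order `4u²`, type
`ε`, with all diagonal entries `−1` (so each has row sum `a i` with `a i · (−1) = ε·2u`).
The block matrix `R` of order `4tu²` with off-diagonal blocks `J` and `i`-th diagonal block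
`H i + J` is a symmetric `(0,1,2)`-matrix without `2` on the main diagonal satisfying
`R² = 4u²·I + (4tu² − 4εu)·J`. -/
theorem R_from_rshcds (t u : ℕ) (ht : 2 ≤ t) (hu : 1 ≤ u) (ε : ℤ) (hε : ε = 1 ∨ ε = -1)
    (H : Fin t → Matrix (Fin (4 * u ^ 2)) (Fin (4 * u ^ 2)) ℤ) (a : Fin t → ℤ)
    (hsymm : ∀ i, (H i).IsSymm)
    (hent : ∀ i x y, H i x y = 1 ∨ H i x y = -1)
    (hHad : ∀ i, H i * H i
      = ((4 * u ^ 2 : ℕ) : ℤ) • (1 : Matrix (Fin (4 * u ^ 2)) (Fin (4 * u ^ 2)) ℤ))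
    (hdiag : ∀ i x, H i x x = -1)
    (hrow : ∀ i x, ∑ y, H i x y = a i)
    (htype : ∀ i, a i * (-1) = ε * (2 * (u : ℤ)))
    (R : Matrix (Fin t × Fin (4 * u ^ 2)) (Fin t × Fin (4 * u ^ 2)) ℤ)
    (hR : ∀ p q : Fin t × Fin (4 * u ^ 2),
      R p q = if p.1 = q.1 then H p.1 p.2 q.2 + 1 else 1) :
    R.IsSymm ∧ (∀ p q, R p q = 0 ∨ R p q = 1 ∨ R p q = 2) ∧ (∀ p, R p p ≠ 2) ∧
    R * R = ((4 * u ^ 2 : ℕ) : ℤ) • 1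
        + (4 * t * (u : ℤ) ^ 2 - 4 * ε * u) • (Matrix.of fun _ _ => (1 : ℤ)) := by
  classical
  have hA : ∀ i, a i = -(ε * (2 * (u : ℤ))) := fun i => by have := htype i; linarith
  have hcol : ∀ i y, ∑ z, H i z y = a i := by
    intro i y
    calc ∑ z, H i z y = ∑ z, H i y z :=
          Finset.sum_congr rfl fun z _ => (hsymm i).apply y z
      _ = a i := hrow i y
  set Jm : Matrix (Fin t × Fin (4 * u ^ 2)) (Fin t × Fin (4 * u ^ 2)) ℤ :=
    Matrix.of fun _ _ => 1 with hJm
  set D : Matrix (Fin t × Fin (4 * u ^ 2)) (Fin t × Fin (4 * u ^ 2)) ℤ :=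
    Matrix.of fun p q => if p.1 = q.1 then H p.1 p.2 q.2 else 0 with hD
  have hRD : R = D + Jm := by
    ext p q
    simp only [hR, hD, hJm, Matrix.add_apply, Matrix.of_apply]
    split_ifs <;> ring
  refine ⟨?_, ?_, ?_, ?_⟩
  · ext p q
    simp only [Matrix.transpose_apply, hR]
    rcases eq_or_ne p.1 q.1 with h | h
    · rw [if_pos h.symm, if_pos h, h, (hsymm q.1).apply q.2 p.2]
    · rw [if_neg (Ne.symm h), if_neg h]
  · intro p q
    rw [hR]
    rcases eq_or_ne p.1 q.1 with h | h
    · rcases hent p.1 p.2 q.2 with h2 | h2 <;> rw [if_pos h, h2] <;> norm_num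
    · simp [h]
  · intro p
    rw [hR]
    simp [hdiag]
  · have hD2 : D * D = ((4 * u ^ 2 : ℕ) : ℤ) • (1 : Matrix (Fin t × Fin (4 * u ^ 2)) (Fin t × Fin (4 * u ^ 2)) ℤ) := by
      ext ⟨i, x⟩ ⟨j, y⟩
      rw [Matrix.mul_apply, Fintype.sum_prod_type]
      simp only [hD, Matrix.of_apply]
      have key : ∀ k : Fin t, ∑ z, (if i = k then H i x z else 0) * (if k = j then H k z y else 0)
          = if i = k then (if k = j then ∑ z, H i x z * H k z y else 0) else 0 := by
        intro k
        split_ifs with h1 h2 <;> simp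
      simp only [key]
      rw [Finset.sum_ite_eq]
      simp only [Finset.mem_univ, if_true]
      rcases eq_or_ne i j with h | h
      · subst h
        simp only [if_pos rfl]
        have := congrFun (congrFun (hHad i) x) y
        rw [Matrix.mul_apply] at this
        rw [this]
        simp [Matrix.one_apply, Prod.ext_iff]
      · simp [h, Matrix.one_apply, Prod.ext_iff, h]
    have hDJ : D * Jm = (-(ε * (2 * (u : ℤ)))) • Jm := by
      ext ⟨i, x⟩ ⟨j, y⟩
      rw [Matrix.mul_apply, Fintype.sum_prod_type]
      simp only [hD, hJm, Matrix.of_apply, mul_one]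
      have key : ∀ k : Fin t, ∑ z, (if i = k then H i x z else 0)
          = if i = k then a i else 0 := by
        intro k
        split_ifs with h1
        · subst h1; exact hrow i x
        · simp
      simp only [key]
      rw [Finset.sum_ite_eq]
      simp [hA i]
    have hJD : Jm * D = (-(ε * (2 * (u : ℤ)))) • Jm := by
      ext ⟨i, x⟩ ⟨j, y⟩
      rw [Matrix.mul_apply, Fintype.sum_prod_type]
      simp only [hD, hJm, Matrix.of_apply, one_mul]
      have key : ∀ k : Fin t, ∑ z, (if k = j then H k z y else 0)
          = if k = j then a j else 0 := by
        intro k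
        split_ifs with h1
        · subst h1; exact hcol k y
        · simp
      simp only [key]
      rw [Finset.sum_ite_eq']
      simp [hA j]
    have hJJ : Jm * Jm = ((t * (4 * u ^ 2) : ℕ) : ℤ) • Jm := by
      ext ⟨i, x⟩ ⟨j, y⟩
      rw [Matrix.mul_apply]
      simp [hJm, Fintype.card_prod, mul_comm]
    rw [hRD, add_mul, mul_add, mul_add, hD2, hDJ, hJD, hJJ]
    have hsc : (-(ε * (2 * (u : ℤ)))) • Jm + ((-(ε * (2 * (u : ℤ)))) • Jm
        + ((t * (4 * u ^ 2) : ℕ) : ℤ) • Jm)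
        = (4 * (t : ℤ) * (u : ℤ) ^ 2 - 4 * ε * u) • Jm := by
      rw [← add_smul, ← add_smul]
      congr 1
      push_cast
      ring
    rw [add_assoc, hsc]
end

section
/- Let u ≥ 1 and let H be a regular Hadamard matrix of order 4u² with all row sums equal to 2δu, δ ∈ {1,−1}. Then the matrix R = [[J, J+H],[(J+H)ᵀ, J]] of order 8u² is a symmetric (0,1,2)-matrix without 2 on the main diagonal satisfying R² = 4u²·I + (8u² + 4δu)·J. -/
open Matrix Finset

lemma tmul_self (m : ℕ) (A : Matrix (Fin m) (Fin m) ℤ) (n : ℤ) (hn : n ≠ 0)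
    (h : A * Aᵀ = n • 1) :
    ∀ i j, ∑ k, A k i * A k j = if i = j then n else 0 := by
  have hq : (n : ℚ) ≠ 0 := Int.cast_ne_zero.mpr hn
  set A' : Matrix (Fin m) (Fin m) ℚ := A.map ⇑(Int.castRingHom ℚ) with hA'
  have hmap : A' * A'ᵀ = (n : ℚ) • 1 := by
    rw [hA', ← Matrix.transpose_map, ← Matrix.map_mul, h]
    ext i j
    simp only [Matrix.map_apply, Matrix.smul_apply, Matrix.one_apply]
    split <;> simp
  have h1 : A' * ((n : ℚ)⁻¹ • A'ᵀ) = 1 := by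
    rw [Matrix.mul_smul, hmap, smul_smul, inv_mul_cancel₀ hq, one_smul]
  have h2 : ((n : ℚ)⁻¹ • A'ᵀ) * A' = 1 := mul_eq_one_comm.mp h1
  have h3 : A'ᵀ * A' = (n : ℚ) • 1 := by
    have := congrArg (fun M => (n : ℚ) • M) h2
    simpa [Matrix.smul_mul, smul_smul, mul_inv_cancel₀ hq] using this
  intro i j
  have := congrFun (congrFun h3 i) j
  simp only [Matrix.mul_apply, Matrix.transpose_apply, Matrix.smul_apply, Matrix.one_apply,
    hA', Matrix.map_apply, Int.coe_castRingHom, mul_ite, mul_one, mul_zero, smul_eq_mul] at this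
  split at this
  · next hij => rw [if_pos hij]; exact_mod_cast this
  · next hij => rw [if_neg hij]; exact_mod_cast this

/-- Let `u ≥ 1` and let `H` be a regular Hadamard matrix of order `4u²` with
all row sums `2δu`, `δ ∈ {1,−1}`. Then `R = [[J, J+H],[(J+H)ᵀ, J]]` of order `8u²` is a
symmetric `(0,1,2)`-matrix without `2` on the main diagonal with
`R² = 4u²·I + (8u² + 4δu)·J`. -/
theorem R_from_regular_hadamard (u : ℕ) (hu : 1 ≤ u) (δ : ℤ) (hδ : δ = 1 ∨ δ = -1)
    (H : Matrix (Fin (4 * u ^ 2)) (Fin (4 * u ^ 2)) ℤ)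
    (hent : ∀ i j, H i j = 1 ∨ H i j = -1)
    (hHad : H * H.transpose
      = ((4 * u ^ 2 : ℕ) : ℤ) • (1 : Matrix (Fin (4 * u ^ 2)) (Fin (4 * u ^ 2)) ℤ))
    (hrow : ∀ i, ∑ j, H i j = 2 * δ * u)
    (R : Matrix (Fin (4 * u ^ 2) ⊕ Fin (4 * u ^ 2)) (Fin (4 * u ^ 2) ⊕ Fin (4 * u ^ 2)) ℤ)
    (hR : R = Matrix.fromBlocks (Matrix.of fun _ _ => (1 : ℤ))
      ((Matrix.of fun _ _ => (1 : ℤ)) + H)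
      ((Matrix.of fun _ _ => (1 : ℤ)) + H).transpose (Matrix.of fun _ _ => (1 : ℤ))) :
    R.IsSymm ∧ (∀ p q, R p q = 0 ∨ R p q = 1 ∨ R p q = 2) ∧ (∀ p, R p p ≠ 2) ∧
    R * R = ((4 * u ^ 2 : ℕ) : ℤ) • 1
        + (8 * (u : ℤ) ^ 2 + 4 * δ * u) • (Matrix.of fun _ _ => (1 : ℤ)) := by
  have hδ2 : δ * δ = 1 := by rcases hδ with h | h <;> simp [h]
  have hn : ((4 * u ^ 2 : ℕ) : ℤ) = 4 * (u : ℤ) ^ 2 := by push_cast; ring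
  have ha2 : (2 * δ * (u:ℤ)) * (2 * δ * u) = ((4 * u ^ 2 : ℕ) : ℤ) := by
    rw [hn]; nlinarith [hδ2]
  have hune : (u : ℤ) ≠ 0 := by exact_mod_cast Nat.one_le_iff_ne_zero.mp hu
  have hane : (2 * δ * u : ℤ) ≠ 0 := by
    rcases hδ with h | h <;> simp [h, hune, Nat.one_le_iff_ne_zero.mp hu]
  have hmne : ((4 * u ^ 2 : ℕ) : ℤ) ≠ 0 := by rw [hn]; positivity
  have hHH : ∀ i j, ∑ k, H i k * H j k = if i = j then ((4 * u ^ 2 : ℕ):ℤ) else 0 := by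
    intro i j
    have := congrFun (congrFun hHad i) j
    simp only [Matrix.mul_apply, Matrix.smul_apply, Matrix.one_apply, Matrix.transpose_apply,
      smul_eq_mul, mul_ite, mul_one, mul_zero] at this
    exact this
  have hHHt : ∀ i j, ∑ k, H k i * H k j = if i = j then ((4 * u ^ 2 : ℕ):ℤ) else 0 :=
    tmul_self _ H _ hmne hHad
  have hcol : ∀ j, ∑ i, H i j = 2 * δ * u := by
    intro j
    have key : (2 * δ * (u:ℤ)) * (∑ i, H i j) = ((4 * u ^ 2 : ℕ):ℤ) := by
      calc (2 * δ * (u:ℤ)) * (∑ i, H i j) = ∑ i, (∑ k, H i k) * H i j := by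
            rw [Finset.mul_sum]; exact Finset.sum_congr rfl fun i _ => by rw [hrow]
        _ = ∑ k, ∑ i, H i k * H i j := by
            rw [← Finset.sum_comm]; exact Finset.sum_congr rfl fun i _ => Finset.sum_mul _ _ _
        _ = ((4 * u ^ 2 : ℕ):ℤ) := by simp [hHHt]
    exact mul_left_cancel₀ hane (key.trans ha2.symm)
  have hRsymm : R.IsSymm := by
    rw [hR]
    ext p q
    cases p <;> cases q <;>
      simp [Matrix.fromBlocks, Matrix.transpose_apply, add_comm]
  refine ⟨hRsymm, ?_, ?_, ?_⟩
  · intro p q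
    cases p with
    | inl i =>
      cases q with
      | inl j => right; left; simp [hR, Matrix.fromBlocks]
      | inr j => rcases hent i j with h | h <;> simp [hR, Matrix.fromBlocks, h]
    | inr i =>
      cases q with
      | inl j => rcases hent j i with h | h <;> simp [hR, Matrix.fromBlocks, h]
      | inr j => right; left; simp [hR, Matrix.fromBlocks]
  · intro p
    cases p <;> simp [hR, Matrix.fromBlocks]
  · ext p q
    have sum1 : ∑ _k : Fin (4 * u ^ 2), (1 : ℤ) = ((4 * u ^ 2 : ℕ):ℤ) := by simp
    cases p with
    | inl i =>
      cases q with
      | inl j =>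
        simp only [hR, Matrix.mul_apply, Fintype.sum_sum_type, Matrix.fromBlocks,
          Matrix.of_apply, Sum.elim_inl, Sum.elim_inr, Matrix.add_apply,
          Matrix.transpose_apply, Matrix.smul_apply, Matrix.one_apply, smul_eq_mul, Sum.inl.injEq, Sum.inr.injEq, reduceCtorEq, if_false]
        have he : ∀ k, (1 + H i k) * (1 + H j k) = 1 + H i k + H j k + H i k * H j k := by
          intro k; ring
        simp only [one_mul, he, Finset.sum_add_distrib, hrow, hHH, sum1]
        rw [hn]
        split <;> push_cast <;> ring
      | inr j =>
        simp only [hR, Matrix.mul_apply, Fintype.sum_sum_type, Matrix.fromBlocks,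
          Matrix.of_apply, Sum.elim_inl, Sum.elim_inr, Matrix.add_apply,
          Matrix.transpose_apply, Matrix.smul_apply, Matrix.one_apply, smul_eq_mul, Sum.inl.injEq, Sum.inr.injEq, reduceCtorEq, if_false]
        simp only [one_mul, mul_one, Finset.sum_add_distrib, hrow, hcol, sum1]
        rw [hn]
        push_cast; ring
    | inr i =>
      cases q with
      | inl j =>
        simp only [hR, Matrix.mul_apply, Fintype.sum_sum_type, Matrix.fromBlocks,
          Matrix.of_apply, Sum.elim_inl, Sum.elim_inr, Matrix.add_apply,
          Matrix.transpose_apply, Matrix.smul_apply, Matrix.one_apply, smul_eq_mul, Sum.inl.injEq, Sum.inr.injEq, reduceCtorEq, if_false]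
        simp only [one_mul, mul_one, Finset.sum_add_distrib, hrow, hcol, sum1]
        rw [hn]
        push_cast; ring
      | inr j =>
        simp only [hR, Matrix.mul_apply, Fintype.sum_sum_type, Matrix.fromBlocks,
          Matrix.of_apply, Sum.elim_inl, Sum.elim_inr, Matrix.add_apply,
          Matrix.transpose_apply, Matrix.smul_apply, Matrix.one_apply, smul_eq_mul, Sum.inl.injEq, Sum.inr.injEq, reduceCtorEq, if_false]
        have he : ∀ k, (1 + H k i) * (1 + H k j) = 1 + H k i + H k j + H k i * H k j := by
          intro k; ring
        simp only [one_mul, he, Finset.sum_add_distrib, hcol, hHHt, sum1]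
        rw [hn]
        split <;> push_cast <;> ring
end

section
/- Let H be a regular Hadamard matrix of order 4u² with row sum 2δu (δ ∈ {±1}), and let H₁, H₂ be symmetric Hadamard matrices of order 4u² with all diagonal entries −1. Then the block matrix M = [[H₁, H, −H₁, H],[Hᵀ, H₂, Hᵀ, −H₂],[−H₁, H, H₁, H],[Hᵀ, −H₂, Hᵀ, H₂]] is an RSHCD of order 16u² and type −δ. -/
open Matrix Finset

/-- Over ℤ, if `H * Hᵀ = c • 1` with `c ≠ 0`, then also `Hᵀ * H = c • 1`. -/
lemma aux_transpose_mul_self {n : Type*} [Fintype n] [DecidableEq n]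
    (H : Matrix n n ℤ) (c : ℤ) (hc : c ≠ 0) (h : H * H.transpose = c • 1) :
    H.transpose * H = c • 1 := by
  have hcq : (c : ℚ) ≠ 0 := by exact_mod_cast hc
  set A : Matrix n n ℚ := H.map (Int.cast : ℤ → ℚ) with hA
  have hmap : A * Aᵀ = (c : ℚ) • 1 := by
    ext i j
    have := congrFun (congrFun h i) j
    simp only [Matrix.mul_apply, Matrix.transpose_apply, Matrix.smul_apply,
      Matrix.one_apply, smul_eq_mul, hA, Matrix.map_apply] at this ⊢
    split_ifs with hij <;> split_ifs at this <;> push_cast <;> exact_mod_cast this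
  have h1 : A * ((c : ℚ)⁻¹ • Aᵀ) = 1 := by
    rw [Matrix.mul_smul, hmap, smul_smul, inv_mul_cancel₀ hcq, one_smul]
  have h2 : ((c : ℚ)⁻¹ • Aᵀ) * A = 1 := mul_eq_one_comm.mp h1
  have h3 : Aᵀ * A = (c : ℚ) • 1 := by
    have := congrArg (fun X => (c : ℚ) • X) h2
    simpa [Matrix.smul_mul, smul_smul, mul_inv_cancel₀ hcq] using this
  ext i j
  have := congrFun (congrFun h3 i) j
  simp only [Matrix.mul_apply, Matrix.transpose_apply, Matrix.smul_apply,
    Matrix.one_apply, smul_eq_mul, hA, Matrix.map_apply] at this ⊢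
  split_ifs with hij <;> split_ifs at this <;> exact_mod_cast this

/-- If `H` is a regular Hadamard matrix of order `4u²` with row sum `2δu`
(`δ ∈ {±1}`) and `H₁, H₂` are symmetric Hadamard matrices of order `4u²` with all diagonal
entries `−1`, then `M = [[H₁, H, −H₁, H],[Hᵀ, H₂, Hᵀ, −H₂],[−H₁, H, H₁, H],[Hᵀ, −H₂, Hᵀ, H₂]]`
is an RSHCD of order `16u²` and type `−δ` (constant diagonal `e`, constant row sum `a`, and
`a·e = (−δ)·4u`). -/
theorem rshcd_recursive_construction_two (u : ℕ) (hu : 1 ≤ u) (δ : ℤ) (hδ : δ = 1 ∨ δ = -1)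
    (H H₁ H₂ : Matrix (Fin (4 * u ^ 2)) (Fin (4 * u ^ 2)) ℤ)
    (hent : ∀ i j, H i j = 1 ∨ H i j = -1)
    (hHad : H * H.transpose = ((4 * u ^ 2 : ℕ) : ℤ) • 1)
    (hrow : ∀ i, ∑ j, H i j = 2 * δ * u)
    (h1symm : H₁.IsSymm) (h1ent : ∀ i j, H₁ i j = 1 ∨ H₁ i j = -1)
    (h1Had : H₁ * H₁ = ((4 * u ^ 2 : ℕ) : ℤ) • 1) (h1diag : ∀ i, H₁ i i = -1)
    (h2symm : H₂.IsSymm) (h2ent : ∀ i j, H₂ i j = 1 ∨ H₂ i j = -1)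
    (h2Had : H₂ * H₂ = ((4 * u ^ 2 : ℕ) : ℤ) • 1) (h2diag : ∀ i, H₂ i i = -1)
    (M : Matrix ((Fin (4 * u ^ 2) ⊕ Fin (4 * u ^ 2)) ⊕ (Fin (4 * u ^ 2) ⊕ Fin (4 * u ^ 2)))
      ((Fin (4 * u ^ 2) ⊕ Fin (4 * u ^ 2)) ⊕ (Fin (4 * u ^ 2) ⊕ Fin (4 * u ^ 2))) ℤ)
    (hM : M = Matrix.fromBlocks
      (Matrix.fromBlocks H₁ H H.transpose H₂)
      (Matrix.fromBlocks (-H₁) H H.transpose (-H₂))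
      (Matrix.fromBlocks (-H₁) H H.transpose (-H₂))
      (Matrix.fromBlocks H₁ H H.transpose H₂)) :
    M.IsSymm ∧ (∀ p q, M p q = 1 ∨ M p q = -1) ∧
    M * M = ((16 * u ^ 2 : ℕ) : ℤ) • 1 ∧
    ∃ e a : ℤ, (∀ p, M p p = e) ∧ (∀ p, ∑ q, M p q = a) ∧
      a * e = (-δ) * (4 * (u : ℤ)) := by
  have hδsq : δ * δ = 1 := by rcases hδ with h | h <;> simp [h]
  have hru : (2 * δ * u : ℤ) ≠ 0 := by
    rcases hδ with h | h <;> subst h <;> simp <;> omega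
  have hHT : H.transpose * H = ((4 * u ^ 2 : ℕ) : ℤ) • 1 := by
    apply aux_transpose_mul_self H _ _ hHad
    have h0 : 0 < 4 * u ^ 2 := by positivity
    exact_mod_cast h0.ne'
  -- column sums of H
  have hcol : ∀ i, ∑ j, H j i = 2 * δ * u := by
    intro i
    have key : ∑ k, (H.transpose * H) k i = ((4 * u ^ 2 : ℕ) : ℤ) := by
      rw [hHT]
      simp [Matrix.smul_apply, Matrix.one_apply]
    have lhs : ∑ k, (H.transpose * H) k i = (2 * δ * u) * ∑ j, H j i := by
      simp only [Matrix.mul_apply, Matrix.transpose_apply]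
      rw [Finset.sum_comm, Finset.mul_sum]
      refine Finset.sum_congr rfl fun j _ => ?_
      rw [← Finset.sum_mul, hrow j]
    have hmm : (2 * δ * u) * ∑ j, H j i = (2 * δ * u) * (2 * δ * u) := by
      rw [← lhs, key]
      push_cast
      nlinarith [hδsq]
    exact mul_left_cancel₀ hru hmm
  refine ⟨?_, ?_, ?_, ?_⟩
  · -- symmetry
    rw [Matrix.IsSymm, hM]
    simp [Matrix.fromBlocks_transpose, Matrix.transpose_neg, h1symm.eq, h2symm.eq]
  · -- entries
    intro p q
    rcases p with (p | p) | (p | p) <;> rcases q with (q | q) | (q | q) <;>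
      simp only [hM, Matrix.fromBlocks_apply₁₁, Matrix.fromBlocks_apply₁₂,
        Matrix.fromBlocks_apply₂₁, Matrix.fromBlocks_apply₂₂, Matrix.neg_apply,
        Matrix.transpose_apply] <;>
      first
        | exact hent _ _
        | exact h1ent _ _
        | exact h2ent _ _
        | ((rcases h1ent p q with h | h <;> simp [h]) <;> done)
        | ((rcases h2ent p q with h | h <;> simp [h]) <;> done)
        | ((rcases hent p q with h | h <;> simp [h]) <;> done)
        | ((rcases hent q p with h | h <;> simp [h]) <;> done)
  · -- M * M
    rw [hM]
    simp only [Matrix.fromBlocks_multiply]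
    rw [← Matrix.fromBlocks_one, ← Matrix.fromBlocks_one]
    simp only [Matrix.fromBlocks_smul, Matrix.fromBlocks_add, Matrix.neg_mul,
      Matrix.mul_neg, neg_neg, smul_zero]
    rw [Matrix.fromBlocks_inj]
    refine ⟨?_, ?_, ?_, ?_⟩ <;>
      (first
        | rw [Matrix.fromBlocks_inj]
        | rw [show (0 : Matrix (Fin (4 * u ^ 2) ⊕ Fin (4 * u ^ 2))
            (Fin (4 * u ^ 2) ⊕ Fin (4 * u ^ 2)) ℤ) = Matrix.fromBlocks 0 0 0 0 from
            (Matrix.fromBlocks_zero).symm, Matrix.fromBlocks_inj]) <;>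
      refine ⟨?_, ?_, ?_, ?_⟩ <;>
      (try simp only [hHad, hHT, h1Had, h2Had]) <;> (try push_cast) <;>
      first | module | abel
  · -- diagonal and row sums
    refine ⟨-1, 4 * δ * u, ?_, ?_, by ring⟩
    · intro p
      rcases p with (p | p) | (p | p) <;> simp [hM, h1diag, h2diag]
    · intro p
      rcases p with (p | p) | (p | p) <;>
        simp only [hM, Fintype.sum_sum_type, Matrix.fromBlocks_apply₁₁,
          Matrix.fromBlocks_apply₁₂, Matrix.fromBlocks_apply₂₁, Matrix.fromBlocks_apply₂₂,
          Matrix.neg_apply, Matrix.transpose_apply, Finset.sum_neg_distrib] <;>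
      · simp only [hrow, hcol]
        ring
end

section
/- If H is an RSHCD of order n and type ε, and K is the 4×4 matrix [[1,−1,1,1],[−1,1,1,1],[1,1,1,−1],[1,1,−1,1]], then K is an RSHCD of order 4 and type +1, and the Kronecker product K ⊗ H is an RSHCD of order 4n and type ε. -/
open Matrix Finset Kronecker

/-- If `H` is an RSHCD of order `n` and type `ε` (constant diagonal `e`, row
sum `a`, `a² = n`, `a·e = ε·|a| = ε·√n`) and `K = [[1,−1,1,1],[−1,1,1,1],[1,1,1,−1],[1,1,−1,1]]`,
then `K` is an RSHCD of order `4` and type `+1`, and `K ⊗ H` is an RSHCD of order `4n` and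
type `ε`. -/
theorem kronecker_with_K4 (n : ℕ) (ε e a : ℤ) (hε : ε = 1 ∨ ε = -1) (he : e = 1 ∨ e = -1)
    (H : Matrix (Fin n) (Fin n) ℤ)
    (hsymm : H.IsSymm) (hent : ∀ i j, H i j = 1 ∨ H i j = -1)
    (hHad : H * H = (n : ℤ) • 1)
    (hdiag : ∀ i, H i i = e) (hrow : ∀ i, ∑ j, H i j = a)
    (ha : a ^ 2 = (n : ℤ)) (htype : a * e = ε * |a|)
    (K : Matrix (Fin 4) (Fin 4) ℤ)
    (hK : K = !![1, -1, 1, 1; -1, 1, 1, 1; 1, 1, 1, -1; 1, 1, -1, 1]) :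
    (K.IsSymm ∧ (∀ i j, K i j = 1 ∨ K i j = -1) ∧ K * K = (4 : ℤ) • 1 ∧
      (∀ i, K i i = 1) ∧ (∀ i, ∑ j, K i j = 2) ∧ (2 : ℤ) * 1 = 1 * |(2 : ℤ)|) ∧
    ((K ⊗ₖ H).IsSymm ∧ (∀ p q, (K ⊗ₖ H) p q = 1 ∨ (K ⊗ₖ H) p q = -1) ∧
      (K ⊗ₖ H) * (K ⊗ₖ H) = ((4 * n : ℕ) : ℤ) • 1 ∧
      (∀ p, (K ⊗ₖ H) p p = e) ∧ (∀ p, ∑ q, (K ⊗ₖ H) p q = 2 * a) ∧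
      (2 * a) ^ 2 = ((4 * n : ℕ) : ℤ) ∧ (2 * a) * e = ε * |2 * a|) := by
  subst hK
  have hKsymm : (!![1, -1, 1, 1; -1, 1, 1, 1; 1, 1, 1, -1; 1, 1, -1, 1] :
      Matrix (Fin 4) (Fin 4) ℤ).IsSymm := by decide
  have hKent : ∀ i j, (!![1, -1, 1, 1; -1, 1, 1, 1; 1, 1, 1, -1; 1, 1, -1, 1] :
      Matrix (Fin 4) (Fin 4) ℤ) i j = 1 ∨
      (!![1, -1, 1, 1; -1, 1, 1, 1; 1, 1, 1, -1; 1, 1, -1, 1] : Matrix (Fin 4) (Fin 4) ℤ) i j = -1 := by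
    intro i j; fin_cases i <;> fin_cases j <;> simp
  have hKmul : (!![1, -1, 1, 1; -1, 1, 1, 1; 1, 1, 1, -1; 1, 1, -1, 1] : Matrix (Fin 4) (Fin 4) ℤ) *
      !![1, -1, 1, 1; -1, 1, 1, 1; 1, 1, 1, -1; 1, 1, -1, 1] = (4 : ℤ) • 1 := by
    decide
  have hKdiag : ∀ i, (!![1, -1, 1, 1; -1, 1, 1, 1; 1, 1, 1, -1; 1, 1, -1, 1] :
      Matrix (Fin 4) (Fin 4) ℤ) i i = 1 := by decide
  have hKrow : ∀ i, ∑ j, (!![1, -1, 1, 1; -1, 1, 1, 1; 1, 1, 1, -1; 1, 1, -1, 1] :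
      Matrix (Fin 4) (Fin 4) ℤ) i j = 2 := by decide
  set K : Matrix (Fin 4) (Fin 4) ℤ := !![1, -1, 1, 1; -1, 1, 1, 1; 1, 1, 1, -1; 1, 1, -1, 1] with hK
  refine ⟨⟨hKsymm, hKent, hKmul, hKdiag, hKrow, by norm_num⟩, ?_, ?_, ?_, ?_, ?_, ?_, ?_⟩
  · unfold Matrix.IsSymm
    rw [← Matrix.kroneckerMap_transpose, hKsymm.eq, hsymm.eq]
  · rintro ⟨i, j⟩ ⟨k, l⟩
    have h1 := hKent i k
    have h2 := hent j l
    simp only [Matrix.kroneckerMap_apply]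
    rcases h1 with h1 | h1 <;> rcases h2 with h2 | h2 <;> rw [h1, h2] <;> norm_num
  · rw [← Matrix.mul_kronecker_mul, hKmul, hHad, Matrix.smul_kronecker,
      Matrix.kronecker_smul, Matrix.one_kronecker_one, smul_smul]
    push_cast
    ring_nf
  · rintro ⟨i, j⟩
    simp only [Matrix.kroneckerMap_apply, hKdiag i, hdiag j, one_mul]
  · rintro ⟨i, j⟩
    rw [Fintype.sum_prod_type]
    simp only [Matrix.kroneckerMap_apply]
    rw [← Finset.sum_mul_sum]
    rw [hKrow i, hrow j]
  · push_cast
    linear_combination 4 * ha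
  · have : |2 * a| = 2 * |a| := by
      rw [abs_mul]; norm_num
    rw [this]
    linear_combination 2 * htype
end

section
/- If H₁ is an RSHCD of order m and type δ, and H₂ is an RSHCD of order n and type ε, then H₁ ⊗ H₂ is an RSHCD of order mn and type δε. -/
open Matrix Finset Kronecker

/-- If `H₁` is an RSHCD of order `m` and type `δ` and `H₂` is an RSHCD of
order `n` and type `ε` (type via `a·e = ε·|a|`, with `a² = order`), then `H₁ ⊗ H₂` is an
RSHCD of order `mn` and type `δε`. -/
theorem kronecker_of_rshcds (m n : ℕ) (δ ε e₁ e₂ a₁ a₂ : ℤ)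
    (hδ : δ = 1 ∨ δ = -1) (hε : ε = 1 ∨ ε = -1)
    (H₁ : Matrix (Fin m) (Fin m) ℤ) (H₂ : Matrix (Fin n) (Fin n) ℤ)
    (h1symm : H₁.IsSymm) (h1ent : ∀ i j, H₁ i j = 1 ∨ H₁ i j = -1)
    (h1Had : H₁ * H₁ = (m : ℤ) • 1)
    (h1diag : ∀ i, H₁ i i = e₁) (h1row : ∀ i, ∑ j, H₁ i j = a₁)
    (h1a : a₁ ^ 2 = (m : ℤ)) (h1type : a₁ * e₁ = δ * |a₁|)
    (h2symm : H₂.IsSymm) (h2ent : ∀ i j, H₂ i j = 1 ∨ H₂ i j = -1)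
    (h2Had : H₂ * H₂ = (n : ℤ) • 1)
    (h2diag : ∀ i, H₂ i i = e₂) (h2row : ∀ i, ∑ j, H₂ i j = a₂)
    (h2a : a₂ ^ 2 = (n : ℤ)) (h2type : a₂ * e₂ = ε * |a₂|) :
    (H₁ ⊗ₖ H₂).IsSymm ∧ (∀ p q, (H₁ ⊗ₖ H₂) p q = 1 ∨ (H₁ ⊗ₖ H₂) p q = -1) ∧
    (H₁ ⊗ₖ H₂) * (H₁ ⊗ₖ H₂) = ((m * n : ℕ) : ℤ) • 1 ∧
    (∀ p, (H₁ ⊗ₖ H₂) p p = e₁ * e₂) ∧ (∀ p, ∑ q, (H₁ ⊗ₖ H₂) p q = a₁ * a₂) ∧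
    (a₁ * a₂) ^ 2 = ((m * n : ℕ) : ℤ) ∧
    (a₁ * a₂) * (e₁ * e₂) = (δ * ε) * |a₁ * a₂| := by

  refine ⟨?_, ?_, ?_, ?_, ?_, ?_, ?_⟩
  · ext ⟨i,j⟩ ⟨k,l⟩
    simp [Matrix.transpose_apply, Matrix.kroneckerMap_apply, h1symm.apply, h2symm.apply]
  · rintro ⟨i, j⟩ ⟨k, l⟩
    rcases h1ent i k with h | h <;> rcases h2ent j l with h' | h' <;>
      simp [Matrix.kroneckerMap_apply, h, h']
  · rw [← Matrix.mul_kronecker_mul, h1Had, h2Had, Matrix.smul_kronecker,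
      Matrix.kronecker_smul, Matrix.one_kronecker_one, smul_smul]
    push_cast
    ring_nf
  · rintro ⟨i, j⟩
    simp [Matrix.kroneckerMap_apply, h1diag, h2diag]
  · rintro ⟨i, j⟩
    rw [Fintype.sum_prod_type]
    simp only [Matrix.kroneckerMap_apply, ← Finset.mul_sum, h2row, ← Finset.sum_mul, h1row]
  · push_cast; rw [← h1a, ← h2a]; ring
  · rw [abs_mul]
    linear_combination e₂ * a₂ * h1type + δ * |a₁| * h2type
end

section
/- For q an odd prime power, the complement of the symplectic graph Sp(4,q) is a divisible design graph with parameters (v = q³+q²+q+1, k = q³, λ₁ = q²(q−1), λ₂ = q²(q−1), m = v/2, n = 2), where the classes are the orbits of the fixed-point free involution (z₁,z₂) ↦ (iz₁,iz₂). -/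
open Projectivization

set_option linter.unusedSectionVars false

section Helpers

/-- Generic fiber-counting lemma. -/
lemma card_fiber_count {α β : Type*} [Finite α] [Finite β] (f : α → β) (T : Set β) (n : ℕ)
    (h : ∀ b ∈ T, Nat.card {a : α // f a = b} = n) :
    Nat.card {a : α | f a ∈ T} = Nat.card T * n := by
  classical
  have e : {a : α | f a ∈ T} ≃ Σ b : T, {a : α // f a = (b : β)} :=
    { toFun := fun a => ⟨⟨f a.1, a.2⟩, ⟨a.1, rfl⟩⟩
      invFun := fun p => ⟨p.2.1, by rw [Set.mem_setOf_eq, p.2.2]; exact p.1.2⟩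
      left_inv := fun a => rfl
      right_inv := fun p => by
        obtain ⟨⟨b, hb⟩, ⟨a, ha⟩⟩ := p
        have ha' : f a = b := ha
        subst ha'
        rfl }
  rw [Nat.card_congr e]
  have : ∀ b : T, Fintype {a : α // f a = (b : β)} := fun b => Fintype.ofFinite _
  have : Fintype T := Fintype.ofFinite _
  rw [Nat.card_eq_fintype_card, Fintype.card_sigma]
  have hcongr : ∀ b : T, Fintype.card {a : α // f a = (b : β)} = n := by
    intro b
    rw [← Nat.card_eq_fintype_card]
    exact h b b.2
  rw [Finset.sum_congr rfl (fun b _ => hcongr b), Finset.sum_const, Finset.card_univ,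
    Nat.card_eq_fintype_card, smul_eq_mul]

/-- Translation equivalence between fibers of a linear map. -/
def cosetEquiv {R M N : Type*} [Ring R] [AddCommGroup M] [Module R M] [AddCommGroup N]
    [Module R N] (f : M →ₗ[R] N) (b : N) (a₀ : M) (h : f a₀ = b) :
    {a : M // f a = b} ≃ {a : M // f a = 0} where
  toFun a := ⟨a.1 - a₀, by simp [a.2, h]⟩
  invFun u := ⟨u.1 + a₀, by simp [u.2, h]⟩
  left_inv a := by ext; simp
  right_inv u := by ext; simp

lemma card_preimage_lin {R M N : Type*} [Ring R] [AddCommGroup M] [Module R M] [AddCommGroup N]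
    [Module R N] [Finite M] [Finite N] (f : M →ₗ[R] N) (hf : Function.Surjective f)
    (T : Set N) :
    Nat.card {a : M | f a ∈ T} = Nat.card T * Nat.card {a : M | f a = 0} := by
  refine card_fiber_count f T _ (fun b _ => ?_)
  obtain ⟨a₀, ha₀⟩ := hf b
  exact Nat.card_congr (cosetEquiv f b a₀ ha₀)

lemma card_ker_lin {R M N : Type*} [Ring R] [AddCommGroup M] [Module R M] [AddCommGroup N]
    [Module R N] [Finite M] [Finite N] (f : M →ₗ[R] N) (hf : Function.Surjective f) :
    Nat.card M = Nat.card N * Nat.card {a : M | f a = 0} := by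
  have := card_preimage_lin f hf Set.univ
  simpa using this

variable {F L : Type*} [Field F] [Field L] [Algebra F L] [Fintype F] [Fintype L]

lemma smul_unit_inj (u u' : Fˣ) (v : L × L) (hv : v ≠ 0) (h : u • v = u' • v) : u = u' := by
  have h1 : ((u : F) • v.1, (u : F) • v.2) = ((u' : F) • v.1, (u' : F) • v.2) := h
  have key : ∀ z : L, z ≠ 0 → (u : F) • z = (u' : F) • z → u = u' := by
    intro z hz hzz
    rw [Algebra.smul_def, Algebra.smul_def] at hzz
    have := mul_right_cancel₀ hz hzz
    exact Units.ext ((algebraMap F L).injective this)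
  rcases Prod.mk.injEq .. ▸ h1 with ⟨e1, e2⟩
  by_cases h1z : v.1 ≠ 0
  · exact key _ h1z e1
  · have h2z : v.2 ≠ 0 := by
      intro h2z; exact hv (Prod.ext (not_not.1 h1z) h2z)
    exact key _ h2z e2

/-- Counting lemma: a scaling-invariant set of nonzero vectors has `(#pts) * (q-1)` elements. -/
lemma proj_count (P : Set (L × L)) (hP0 : (0 : L × L) ∉ P)
    (hP : ∀ (u : Fˣ) (v : L × L), u • v ∈ P ↔ v ∈ P) :
    Nat.card {v : L × L | v ∈ P} =
      Nat.card {y : Projectivization F (L × L) | y.rep ∈ P} * (Fintype.card F - 1) := by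
  classical
  haveI : Finite (Projectivization F (L × L)) := Quotient.finite _
  set T : Set (Projectivization F (L × L)) := {y | y.rep ∈ P} with hT
  have hne : ∀ v : ↥P, (v : L × L) ≠ 0 := fun v h => hP0 (h ▸ v.2)
  let f : ↥P → Projectivization F (L × L) := fun v => mk F v.1 (hne v)
  have hfT : ∀ v : ↥P, f v ∈ T := by
    intro v
    obtain ⟨u, hu⟩ := exists_smul_eq_mk_rep F (v : L × L) (hne v)
    show (mk F v.1 (hne v)).rep ∈ P
    rw [← hu, hP]
    exact v.2
  have e1 : Nat.card {a : ↥P | f a ∈ T} = Nat.card ↥P :=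
    Nat.card_congr (Equiv.subtypeUnivEquiv hfT)
  have main : Nat.card {a : ↥P | f a ∈ T} = Nat.card T * (Fintype.card F - 1) := by
    refine card_fiber_count f T _ (fun y hy => ?_)
    have hyP : y.rep ∈ P := hy
    let g : Fˣ → {a : ↥P // f a = y} := fun u =>
      ⟨⟨u • y.rep, (hP u _).2 hyP⟩, by
        show mk F (u • y.rep) _ = y
        conv_rhs => rw [← mk_rep y]
        exact (mk_eq_mk_iff F _ _ _ (rep_nonzero y)).2 ⟨u, rfl⟩⟩
    have hg : Function.Bijective g := by
      constructor
      · intro u u' huu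
        have h1 : (u • y.rep : L × L) = u' • y.rep :=
          congrArg (fun a : {a : ↥P // f a = y} => (a.1 : L × L)) huu
        exact smul_unit_inj u u' y.rep (rep_nonzero y) h1
      · rintro ⟨⟨a, haP⟩, hfa⟩
        have : mk F a (hne ⟨a, haP⟩) = mk F y.rep (rep_nonzero y) := by
          rw [mk_rep y]; exact hfa
        obtain ⟨u, hu⟩ := (mk_eq_mk_iff F _ _ _ (rep_nonzero y)).1 this
        exact ⟨u, Subtype.ext (Subtype.ext hu)⟩
    rw [← Nat.card_congr (Equiv.ofBijective g hg), Nat.card_eq_fintype_card,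
      Fintype.card_units]
  rw [Set.setOf_mem_eq, ← e1, main]

lemma mem_S_smul (u : F) (hu : u ≠ 0) (s : L) :
    algebraMap F L u * s ∈ Set.range (algebraMap F L) ↔ s ∈ Set.range (algebraMap F L) := by
  constructor
  · rintro ⟨b, hb⟩
    refine ⟨u⁻¹ * b, ?_⟩
    rw [map_mul, hb, ← mul_assoc, map_inv₀, inv_mul_cancel₀, one_mul]
    exact fun h => hu ((algebraMap F L).injective (by rw [h, map_zero]))
  · rintro ⟨a, rfl⟩
    exact ⟨u * a, by rw [map_mul]⟩

lemma card_S : Nat.card (Set.range (algebraMap F L)) = Fintype.card F := by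
  rw [Nat.card_range_of_injective (algebraMap F L).injective, Nat.card_eq_fintype_card]

lemma card_not_S :
    Nat.card {s : L | s ∉ Set.range (algebraMap F L)} = Fintype.card L - Fintype.card F := by
  have h := Set.ncard_add_ncard_compl (Set.range (algebraMap F L)) (Set.toFinite _)
    (Set.toFinite _)
  have h2 : {s : L | s ∉ Set.range (algebraMap F L)} = (Set.range (algebraMap F L))ᶜ := rfl
  rw [Nat.card_coe_set_eq, h2]
  have hS := @card_S F L _ _ _ _ _
  rw [Nat.card_coe_set_eq] at hS
  rw [Nat.card_eq_fintype_card] at h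
  omega

lemma card_not_S_two (t : L) (ht : t ∉ Set.range (algebraMap F L)) :
    Nat.card {s : L | s ∉ Set.range (algebraMap F L) ∧ t * s ∉ Set.range (algebraMap F L)} =
      Fintype.card L - (2 * Fintype.card F - 1) := by
  set S := Set.range (algebraMap F L) with hSdef
  have ht0 : t ≠ 0 := fun h => ht (h ▸ ⟨0, by simp⟩)
  set S' : Set L := {s | t * s ∈ S} with hS'
  have hset : {s : L | s ∉ S ∧ t * s ∉ S} = (S ∪ S')ᶜ := by
    ext s; simp [S', not_or]
  have hS'card : S'.ncard = Fintype.card F := by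
    have him : S' = (Equiv.mulLeft₀ t ht0).symm '' S := by
      rw [Equiv.image_eq_preimage_symm]
      rfl
    rw [him, Set.ncard_image_of_injective S (Equiv.mulLeft₀ t ht0).symm.injective,
      ← Nat.card_coe_set_eq, card_S]
  have hinter : S ∩ S' = {0} := by
    ext s
    simp only [Set.mem_inter_iff, Set.mem_singleton_iff]
    constructor
    · rintro ⟨⟨a, rfl⟩, hs'⟩
      obtain ⟨b, hb⟩ := hs'
      by_contra hne
      have ha : a ≠ 0 := fun h => hne (by rw [h, map_zero])
      apply ht
      refine ⟨b * a⁻¹, ?_⟩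
      rw [map_mul, map_inv₀, hb, mul_inv_cancel_right₀ hne]
    · rintro rfl
      exact ⟨⟨0, by simp⟩, show t * 0 ∈ S by rw [mul_zero]; exact ⟨0, by simp⟩⟩
  have hunion := Set.ncard_union_add_ncard_inter S S' (Set.toFinite _) (Set.toFinite _)
  rw [hinter, Set.ncard_singleton] at hunion
  have hcompl := Set.ncard_add_ncard_compl (S ∪ S') (Set.toFinite _) (Set.toFinite _)
  have hScard : S.ncard = Fintype.card F := by rw [← Nat.card_coe_set_eq, card_S]
  rw [Nat.card_coe_set_eq, hset]
  rw [Nat.card_eq_fintype_card] at hcompl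
  have hle : Fintype.card F ≤ Fintype.card L := by
    have : (S ∪ S').ncard ≤ Fintype.card L := by
      rw [← Nat.card_eq_fintype_card, ← Set.ncard_univ]
      exact Set.ncard_le_ncard (Set.subset_univ _) (Set.toFinite _)
    omega
  omega

/-- The symplectic form on `L × L` as a linear map in the second variable. -/
def sympB {L : Type*} [Field L] (x : L × L) : (L × L) →ₗ[L] L :=
  x.1 • (LinearMap.snd L L L) - x.2 • (LinearMap.fst L L L)

lemma sympB_apply {L : Type*} [Field L] (x w : L × L) :
    sympB x w = x.1 * w.2 - x.2 * w.1 := by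
  simp [sympB, smul_eq_mul]

lemma sympB_surj {L : Type*} [Field L] (x : L × L) (hx : x ≠ 0) :
    Function.Surjective (sympB x) := by
  intro s
  by_cases h1 : x.1 ≠ 0
  · exact ⟨(0, x.1⁻¹ * s), by rw [sympB_apply]; field_simp; simp⟩
  · have h2 : x.2 ≠ 0 := fun h2 => hx (Prod.ext (not_not.1 h1) h2)
    refine ⟨(-(x.2⁻¹ * s), 0), ?_⟩
    rw [sympB_apply]
    field_simp
    simp

lemma sympB_smul_left {L : Type*} [Field L] (t : L) (x w : L × L) :
    sympB (t • x) w = t * sympB x w := by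
  simp only [sympB_apply, Prod.smul_fst, Prod.smul_snd, smul_eq_mul]
  ring

lemma sympB_dep {L : Type*} [Field L] (x w : L × L) (hw : w ≠ 0) (h : sympB x w = 0) :
    ∃ r : L, x = r • w := by
  rw [sympB_apply, sub_eq_zero] at h
  by_cases h1 : w.1 ≠ 0
  · refine ⟨x.1 * w.1⁻¹, ?_⟩
    have e : (x.1 * w.1⁻¹) • w = (x.1 * w.1⁻¹ * w.1, x.1 * w.1⁻¹ * w.2) := rfl
    refine Prod.ext ?_ ?_ <;> simp only [e]
    · exact (inv_mul_cancel_right₀ h1 x.1).symm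
    · rw [mul_comm x.1 w.1⁻¹, mul_assoc, h, mul_comm x.2 w.1, ← mul_assoc,
        inv_mul_cancel₀ h1, one_mul]
  · have h2 : w.2 ≠ 0 := fun h2 => hw (Prod.ext (not_not.1 h1) h2)
    have h1' : w.1 = 0 := not_not.1 h1
    have hx1 : x.1 = 0 := by
      have hh := h
      rw [h1', mul_zero] at hh
      exact (mul_eq_zero.1 hh).resolve_right h2
    refine ⟨x.2 * w.2⁻¹, ?_⟩
    have e : (x.2 * w.2⁻¹) • w = (x.2 * w.2⁻¹ * w.1, x.2 * w.2⁻¹ * w.2) := rfl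
    refine Prod.ext ?_ ?_ <;> simp only [e]
    · rw [hx1, h1', mul_zero]
    · exact (inv_mul_cancel_right₀ h2 x.2).symm

end Helpers

/-- For `q` an odd prime power, realize `Sp(4,q)` on the projective line over
`L = 𝔽_{q²}` viewed as an `F = 𝔽_q`-space: vertices are `F`-lines in `L²` (the points of
`ℙ F (L × L)`), with `x ~ y` iff `x ≠ y` and the symplectic form of representatives lies in
`F`. Then the complement of `Sp(4,q)` is a divisible design graph with parameters
`(v = q³+q²+q+1, k = q³, λ₁ = q²(q−1), λ₂ = q²(q−1), m = v/2, n = 2)`, where the classes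
are the orbits `{x, σ x}` of the fixed-point free involution `σ` induced by
`(z₁,z₂) ↦ (iz₁, iz₂)`. -/
theorem compl_sp4_is_thin_ddg (q : ℕ) (hq : Odd q) (hqpp : IsPrimePow q)
    (F L : Type*) [Field F] [Field L] [Algebra F L] [Fintype F] [Fintype L]
    (hF : Fintype.card F = q) (hL : Fintype.card L = q ^ 2)
    (c : F) (hc : ¬∃ b : F, b ^ 2 = c) (i : L) (hi : i ^ 2 = algebraMap F L c)
    (G : SimpleGraph (Projectivization F (L × L)))
    (hG : ∀ x y, G.Adj x y ↔ x ≠ y ∧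
      x.rep.1 * y.rep.2 - x.rep.2 * y.rep.1 ∈ Set.range (algebraMap F L)) :
    ∃ σ : Projectivization F (L × L) → Projectivization F (L × L),
      (∀ (v : L × L) (hv : v ≠ 0) (hv' : i • v ≠ 0),
        σ (Projectivization.mk F v hv) = Projectivization.mk F (i • v) hv') ∧
      (∀ x, σ (σ x) = x) ∧ (∀ x, σ x ≠ x) ∧
      (∀ x y, Gᶜ.Adj x y ↔ Gᶜ.Adj (σ x) (σ y)) ∧
      Nat.card (Projectivization F (L × L)) = q ^ 3 + q ^ 2 + q + 1 ∧
      (∀ x, Nat.card {y | Gᶜ.Adj x y} = q ^ 3) ∧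
      (∀ x y, x ≠ y →
        Nat.card {z | Gᶜ.Adj x z ∧ Gᶜ.Adj y z} = q ^ 2 * (q - 1)) := by
  classical
  haveI : Finite (Projectivization F (L × L)) := Quotient.finite _
  set S : Set L := Set.range (algebraMap F L) with hSdef
  have hq2 : 2 ≤ q := hqpp.two_le
  have hc0 : c ≠ 0 := fun h => hc ⟨0, by rw [h]; ring⟩
  have hi0 : i ≠ 0 := fun h => hc0 ((algebraMap F L).injective
    (by rw [← hi, h]; simp))
  have hialg : ∀ a : F, i ≠ algebraMap F L a := fun a ha =>
    hc ⟨a, (algebraMap F L).injective (by rw [map_pow, ← ha, hi])⟩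
  have hzeroS : (0 : L) ∈ S := ⟨0, map_zero _⟩
  have hFsmul : ∀ (a : F) (w : L × L), a • w = (algebraMap F L a) • w := by
    intro a w
    refine Prod.ext ?_ ?_ <;>
      simp [Algebra.smul_def]
  have hsmulne : ∀ v : L × L, v ≠ 0 → i • v ≠ 0 := fun v hv => smul_ne_zero hi0 hv
  have mkc : ∀ (a b : L × L) (ha : a ≠ 0) (hb : b ≠ 0), a = b →
      Projectivization.mk F a ha = Projectivization.mk F b hb := by
    rintro a b ha hb rfl; rfl
  set σ : Projectivization F (L × L) → Projectivization F (L × L) :=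
    fun x => Projectivization.mk F (i • x.rep) (hsmulne _ (rep_nonzero x)) with hσdef
  -- Part 1
  have part1 : ∀ (v : L × L) (hv : v ≠ 0) (hv' : i • v ≠ 0),
      σ (Projectivization.mk F v hv) = Projectivization.mk F (i • v) hv' := by
    intro v hv hv'
    obtain ⟨u, hu⟩ := exists_smul_eq_mk_rep F v hv
    have h1 : i • (Projectivization.mk F v hv).rep = ((u : F) • (i • v) : L × L) := by
      rw [← hu, Units.smul_def, hFsmul, hFsmul, smul_smul, smul_smul, mul_comm]
    have hne2 : ((u : F) • (i • v) : L × L) ≠ 0 :=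
      h1 ▸ hsmulne _ (rep_nonzero _)
    calc σ (Projectivization.mk F v hv)
        = Projectivization.mk F ((u : F) • (i • v)) hne2 := mkc _ _ _ _ h1
      _ = Projectivization.mk F (i • v) hv' := (mk_eq_mk_iff' F _ _ _ _).2 ⟨u, rfl⟩
  -- Part 2
  have part2 : ∀ x, σ (σ x) = x := by
    intro x
    have h1 : σ (σ x) = Projectivization.mk F (i • (i • x.rep))
        (hsmulne _ (hsmulne _ (rep_nonzero x))) :=
      part1 (i • x.rep) (hsmulne _ (rep_nonzero x)) _
    rw [h1]
    have h2 : (i • (i • x.rep) : L × L) = (c • x.rep : L × L) := by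
      rw [smul_smul, hFsmul, ← pow_two, hi]
    have hne3 : (c • x.rep : L × L) ≠ 0 := h2 ▸ hsmulne _ (hsmulne _ (rep_nonzero x))
    calc Projectivization.mk F (i • (i • x.rep)) _
        = Projectivization.mk F (c • x.rep) hne3 := mkc _ _ _ _ h2
      _ = Projectivization.mk F x.rep (rep_nonzero x) :=
          (mk_eq_mk_iff' F _ _ _ _).2 ⟨c, rfl⟩
      _ = x := mk_rep x
  -- Part 3
  have part3 : ∀ x, σ x ≠ x := by
    intro x h
    rw [hσdef] at h
    conv_rhs at h => rw [← mk_rep x]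
    obtain ⟨a, ha⟩ := (mk_eq_mk_iff' F _ _ _ (rep_nonzero x)).1 h
    rw [hFsmul] at ha
    have : ((algebraMap F L a - i) • x.rep : L × L) = 0 := by
      rw [sub_smul, ha, sub_self]
    rcases smul_eq_zero.1 this with h0 | h0
    · exact hialg a (by rw [sub_eq_zero] at h0; exact h0.symm)
    · exact rep_nonzero x h0
  -- adjacency characterization
  have hGc : ∀ x y, Gᶜ.Adj x y ↔
      x.rep.1 * y.rep.2 - x.rep.2 * y.rep.1 ∉ S := by
    intro x y
    rw [SimpleGraph.compl_adj, hG]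
    constructor
    · rintro ⟨hne, hnot⟩ hmem
      exact hnot ⟨hne, hmem⟩
    · intro hmem
      have hne : x ≠ y := by
        rintro rfl
        refine hmem ?_
        have : x.rep.1 * x.rep.2 - x.rep.2 * x.rep.1 = 0 := by ring
        rw [this]; exact hzeroS
      exact ⟨hne, fun h => hmem h.2⟩
  -- Part 4
  have part4 : ∀ x y, Gᶜ.Adj x y ↔ Gᶜ.Adj (σ x) (σ y) := by
    intro x y
    rw [hGc, hGc]
    obtain ⟨u, hu⟩ := exists_smul_eq_mk_rep F (i • x.rep) (hsmulne _ (rep_nonzero x))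
    obtain ⟨u', hu'⟩ := exists_smul_eq_mk_rep F (i • y.rep) (hsmulne _ (rep_nonzero y))
    have hx : (σ x).rep = ((algebraMap F L u * i) • x.rep : L × L) := by
      rw [hσdef]
      show (Projectivization.mk F (i • x.rep) _).rep = _
      rw [← hu, Units.smul_def, hFsmul, smul_smul]
    have hy : (σ y).rep = ((algebraMap F L u' * i) • y.rep : L × L) := by
      rw [hσdef]
      show (Projectivization.mk F (i • y.rep) _).rep = _
      rw [← hu', Units.smul_def, hFsmul, smul_smul]
    have key : (σ x).rep.1 * (σ y).rep.2 - (σ x).rep.2 * (σ y).rep.1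
        = algebraMap F L ((u : F) * (u' : F) * c) *
          (x.rep.1 * y.rep.2 - x.rep.2 * y.rep.1) := by
      rw [hx, hy]
      simp only [Prod.smul_fst, Prod.smul_snd, smul_eq_mul, map_mul]
      linear_combination (algebraMap F L (u : F) * algebraMap F L (u' : F) *
        (x.rep.1 * y.rep.2 - x.rep.2 * y.rep.1)) * hi
    rw [key]
    have hne : ((u : F) * (u' : F) * c) ≠ 0 :=
      mul_ne_zero (mul_ne_zero u.ne_zero u'.ne_zero) hc0
    exact (not_congr (mem_S_smul _ hne _)).symm
  -- cardinality preliminaries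
  have hcardL : Nat.card L = q ^ 2 := by rw [Nat.card_eq_fintype_card, hL]
  have hcardLL : Nat.card (L × L) = q ^ 2 * q ^ 2 := by
    rw [Nat.card_eq_fintype_card, Fintype.card_prod, hL]
  have hq2pos : 0 < q ^ 2 := pow_pos (by omega) 2
  have hKer : ∀ v : L × L, v ≠ 0 →
      Nat.card {a : L × L | sympB v a = 0} = q ^ 2 := by
    intro v hv
    have h := card_ker_lin (sympB v) (sympB_surj v hv)
    rw [hcardLL, hcardL] at h
    exact (Nat.eq_of_mul_eq_mul_left hq2pos h.symm)
  have hcancel : ∀ a b : ℕ, a * (q - 1) = b * (q - 1) → a = b := fun a b h =>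
    Nat.eq_of_mul_eq_mul_right (by omega) h
  have e1 : q ^ 2 - q = q * (q - 1) := by
    refine Nat.sub_eq_of_eq_add ?_
    obtain ⟨r, rfl⟩ : ∃ r, q = r + 1 := ⟨q - 1, by omega⟩
    simp only [Nat.add_sub_cancel]
    ring
  have e2 : q ^ 2 - (2 * q - 1) = (q - 1) * (q - 1) := by
    refine Nat.sub_eq_of_eq_add ?_
    obtain ⟨r, rfl⟩ : ∃ r, q = r + 1 := ⟨q - 1, by omega⟩
    simp only [Nat.add_sub_cancel]
    have h21 : 2 * (r + 1) - 1 = 2 * r + 1 := by omega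
    rw [h21]; ring
  -- Part 5
  have part5 : Nat.card (Projectivization F (L × L)) = q ^ 3 + q ^ 2 + q + 1 := by
    set Pall : Set (L × L) := {v | v ≠ 0} with hPall
    have hPallinv : ∀ (u : Fˣ) (v : L × L), u • v ∈ Pall ↔ v ∈ Pall := by
      intro u v
      simp only [hPall, Set.mem_setOf_eq]
      constructor
      · intro h hv0; rw [hv0, smul_zero] at h; exact h rfl
      · intro hv h0
        apply hv
        have h2 := congrArg (fun w : L × L => u⁻¹ • w) h0
        simpa [smul_smul] using h2
    have h1 := proj_count (F := F) Pall (by simp [hPall]) hPallinv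
    have hvec : Nat.card {v : L × L | v ∈ Pall} = q ^ 2 * q ^ 2 - 1 := by
      have hcompl := Set.ncard_add_ncard_compl ({0} : Set (L × L)) (Set.toFinite _)
        (Set.toFinite _)
      have hPc : Pall = ({0} : Set (L × L))ᶜ := by ext v; simp [hPall]
      rw [Set.setOf_mem_eq, Nat.card_coe_set_eq, hPc]
      rw [Set.ncard_singleton, hcardLL] at hcompl
      omega
    have huniv : Nat.card {y : Projectivization F (L × L) | y.rep ∈ Pall}
        = Nat.card (Projectivization F (L × L)) :=
      Nat.card_congr (Equiv.subtypeUnivEquiv (fun y => rep_nonzero y))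
    rw [hvec, huniv, hF] at h1
    have e3 : q ^ 2 * q ^ 2 - 1 = (q ^ 3 + q ^ 2 + q + 1) * (q - 1) := by
      refine Nat.sub_eq_of_eq_add ?_
      obtain ⟨r, rfl⟩ : ∃ r, q = r + 1 := ⟨q - 1, by omega⟩
      simp only [Nat.add_sub_cancel]
      ring
    rw [e3] at h1
    exact hcancel _ _ h1.symm
  -- Part 6
  have part6 : ∀ x, Nat.card {y | Gᶜ.Adj x y} = q ^ 3 := by
    intro x
    set P : Set (L × L) := {w | sympB x.rep w ∉ S} with hP
    have hset : {y | Gᶜ.Adj x y} = {y : Projectivization F (L × L) | y.rep ∈ P} := by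
      ext y
      rw [Set.mem_setOf_eq, hGc, hP]
      simp [sympB_apply]
    have hP0 : (0 : L × L) ∉ P := fun h => h (by rw [map_zero]; exact hzeroS)
    have hPinv : ∀ (u : Fˣ) (v : L × L), u • v ∈ P ↔ v ∈ P := by
      intro u v
      simp only [hP, Set.mem_setOf_eq]
      rw [Units.smul_def, hFsmul, map_smul, smul_eq_mul]
      exact not_congr (mem_S_smul _ u.ne_zero _)
    have h1 := proj_count (F := F) P hP0 hPinv
    have hvec : Nat.card {v : L × L | v ∈ P} = (q ^ 2 - q) * q ^ 2 := by
      have h2 := card_preimage_lin (sympB x.rep) (sympB_surj _ (rep_nonzero x))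
        {s : L | s ∉ S}
      rw [hKer _ (rep_nonzero x)] at h2
      have h3 : Nat.card {s : L | s ∉ S} = q ^ 2 - q := by
        rw [hSdef, card_not_S, hF, hL]
      rw [h3] at h2
      exact h2
    rw [hvec, hF] at h1
    have e4 : (q ^ 2 - q) * q ^ 2 = q ^ 3 * (q - 1) := by rw [e1]; ring
    rw [e4] at h1
    rw [hset]
    exact hcancel _ _ h1.symm
  -- Part 7
  have part7 : ∀ x y, x ≠ y →
      Nat.card {z | Gᶜ.Adj x z ∧ Gᶜ.Adj y z} = q ^ 2 * (q - 1) := by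
    intro x y hxy
    set P2 : Set (L × L) := {w | sympB x.rep w ∉ S ∧ sympB y.rep w ∉ S} with hP2
    have hset : {z | Gᶜ.Adj x z ∧ Gᶜ.Adj y z}
        = {z : Projectivization F (L × L) | z.rep ∈ P2} := by
      ext z
      rw [Set.mem_setOf_eq, hGc, hGc, hP2]
      simp [sympB_apply]
    have hP0 : (0 : L × L) ∉ P2 := fun h => h.1 (by rw [map_zero]; exact hzeroS)
    have hPinv : ∀ (u : Fˣ) (v : L × L), u • v ∈ P2 ↔ v ∈ P2 := by
      intro u v
      simp only [hP2, Set.mem_setOf_eq]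
      rw [Units.smul_def, hFsmul, map_smul, map_smul, smul_eq_mul, smul_eq_mul]
      exact and_congr (not_congr (mem_S_smul _ u.ne_zero _))
        (not_congr (mem_S_smul _ u.ne_zero _))
    have h1 := proj_count (F := F) P2 hP0 hPinv
    rw [hF] at h1
    rw [hset]
    have hvec : Nat.card {v : L × L | v ∈ P2} = q ^ 2 * (q - 1) * (q - 1) := by
      by_cases hdep : ∃ t : L, y.rep = t • x.rep
      · obtain ⟨t, ht⟩ := hdep
        have htS : t ∉ S := by
          rintro ⟨a, ha⟩
          apply hxy
          have ha0 : (a : F) ≠ 0 := by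
            rintro rfl
            rw [map_zero] at ha
            exact rep_nonzero y (by rw [ht, ← ha, zero_smul])
          have : y = x := by
            conv_lhs => rw [← mk_rep y]
            conv_rhs => rw [← mk_rep x]
            refine (mk_eq_mk_iff' F _ _ _ _).2 ⟨a, ?_⟩
            rw [hFsmul, ha, ← ht]
          exact this.symm
        have hPT : P2 = {w | sympB x.rep w ∈ {s : L | s ∉ S ∧ t * s ∉ S}} := by
          ext w
          simp only [hP2, Set.mem_setOf_eq, ht, sympB_smul_left]
        have h2 := card_preimage_lin (sympB x.rep) (sympB_surj _ (rep_nonzero x))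
          {s : L | s ∉ S ∧ t * s ∉ S}
        rw [hKer _ (rep_nonzero x)] at h2
        have h3 : Nat.card {s : L | s ∉ S ∧ t * s ∉ S} = q ^ 2 - (2 * q - 1) := by
          rw [hSdef, card_not_S_two t htS, hF, hL]
        rw [h3] at h2
        rw [Set.setOf_mem_eq, hPT]
        rw [h2, e2]
        ring
      · set Φ := (sympB x.rep).prod (sympB y.rep) with hPhi
        have hker : ∀ w : L × L, Φ w = 0 → w = 0 := by
          intro w hw
          by_contra hwne
          have hw1 : sympB x.rep w = 0 := congrArg Prod.fst hw
          have hw2 : sympB y.rep w = 0 := congrArg Prod.snd hw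
          obtain ⟨r, hr⟩ := sympB_dep x.rep w hwne hw1
          obtain ⟨r', hr'⟩ := sympB_dep y.rep w hwne hw2
          have hr0 : r ≠ 0 := by
            rintro rfl
            exact rep_nonzero x (by rw [hr, zero_smul])
          exact hdep ⟨r' * r⁻¹, by
            rw [hr', hr, smul_smul, mul_assoc, inv_mul_cancel₀ hr0, mul_one]⟩
        have hinj : Function.Injective Φ := by
          rw [← LinearMap.ker_eq_bot]
          exact LinearMap.ker_eq_bot'.2 hker
        have hbij := Finite.injective_iff_bijective.1 hinj
        have hfib : ∀ b : L × L, Nat.card {z : L × L // Φ z = b} = 1 := by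
          intro b
          obtain ⟨a, ha⟩ := hbij.2 b
          rw [Nat.card_eq_one_iff_unique]
          exact ⟨⟨fun z1 z2 => Subtype.ext (hinj (z1.2.trans z2.2.symm))⟩, ⟨⟨a, ha⟩⟩⟩
        have hPU : P2 = {w : L × L | Φ w ∈ ({s : L | s ∉ S} ×ˢ {s : L | s ∉ S})} := by
          ext w
          simp only [hP2, Set.mem_setOf_eq, hPhi, LinearMap.prod_apply, Function.prod,
            Set.mem_prod]
        have h2 := card_fiber_count Φ ({s : L | s ∉ S} ×ˢ {s : L | s ∉ S}) 1
          (fun b _ => hfib b)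
        have hU : Nat.card (({s : L | s ∉ S} ×ˢ {s : L | s ∉ S} : Set (L × L)))
            = (q ^ 2 - q) * (q ^ 2 - q) := by
          rw [Nat.card_congr (Equiv.Set.prod _ _), Nat.card_prod]
          rw [hSdef, card_not_S, hF, hL]
        rw [Set.setOf_mem_eq, hPU, h2, hU, e1]
        ring
    rw [hvec] at h1
    exact hcancel _ _ h1.symm
  exact ⟨σ, part1, part2, part3, part4, part5, part6, part7⟩
end

section
/- Let t ≥ 3, u ≥ 1, let R be the symmetric (0,1,2)-matrix of order 4tu² built from t RSHCDs of order 4u² and type ε with diagonal −1 (diagonal blocks H_i + J, off-diagonal blocks J), and let Q be a symmetric weighing matrix of order 4tu² and weight 4u²(t−1) with the same t zero diagonal blocks of size 4u² and Q ≡ R (mod 2). Then the pair (R,Q) yields, via A = (1/2)[[R+Q, R−Q],[R−Q, R+Q]], a divisible design graph with parameters (8tu², 4tu² − 2εu, 4u² − 2εu, 2tu² − 2εu, 4tu², 2); moreover λ₁ ≠ λ₂ since t ≥ 3. -/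
open Matrix Finset


private lemma mat_smul_cancel {m n : Type*} {c : ℤ} (hc : c ≠ 0)
    {M N : Matrix m n ℤ} (h : c • M = c • N) : M = N := by
  ext i j
  have h' := congrFun (congrFun h i) j
  simp only [Matrix.smul_apply, smul_eq_mul] at h'
  exact mul_left_cancel₀ hc h'

/-- Let `t ≥ 3`, `u ≥ 1`, let `R` (of order `4tu²`) be built from `t` RSHCDs
`H i` of order `4u²`, type `ε`, with diagonal `−1` (diagonal blocks `H i + J`, off-diagonal
blocks `J`), and let `Q` be a symmetric weighing matrix of order `4tu²` and weight
`4u²(t−1)` with the same `t` zero diagonal blocks of size `4u²` and `Q ≡ R (mod 2)`.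
Then `A = ½[[R+Q, R−Q],[R−Q, R+Q]]` is the adjacency matrix of a divisible design graph
with parameters `(8tu², 4tu² − 2εu, 4u² − 2εu, 2tu² − 2εu, 4tu², 2)` (classes are the pairs
encoded by `P = fromBlocks 1 1 1 1`); moreover `λ₁ ≠ λ₂` since `t ≥ 3`. -/
theorem thin_ddg_from_multipartite_signing (t u : ℕ) (ht : 3 ≤ t) (hu : 1 ≤ u)
    (ε : ℤ) (hε : ε = 1 ∨ ε = -1)
    (H : Fin t → Matrix (Fin (4 * u ^ 2)) (Fin (4 * u ^ 2)) ℤ) (a : Fin t → ℤ)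
    (hsymm : ∀ i, (H i).IsSymm)
    (hent : ∀ i x y, H i x y = 1 ∨ H i x y = -1)
    (hHad : ∀ i, H i * H i
      = ((4 * u ^ 2 : ℕ) : ℤ) • (1 : Matrix (Fin (4 * u ^ 2)) (Fin (4 * u ^ 2)) ℤ))
    (hdiag : ∀ i x, H i x x = -1)
    (hrow : ∀ i x, ∑ y, H i x y = a i)
    (htype : ∀ i, a i * (-1) = ε * (2 * (u : ℤ)))
    (R Q : Matrix (Fin t × Fin (4 * u ^ 2)) (Fin t × Fin (4 * u ^ 2)) ℤ)
    (hR : ∀ p q : Fin t × Fin (4 * u ^ 2),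
      R p q = if p.1 = q.1 then H p.1 p.2 q.2 + 1 else 1)
    (hQsymm : Q.IsSymm)
    (hQent : ∀ p q, Q p q = 0 ∨ Q p q = 1 ∨ Q p q = -1)
    (hQw : Q * Q.transpose = ((4 * u ^ 2 * (t - 1) : ℕ) : ℤ)
      • (1 : Matrix (Fin t × Fin (4 * u ^ 2)) (Fin t × Fin (4 * u ^ 2)) ℤ))
    (hQblocks : ∀ (i : Fin t) (x y : Fin (4 * u ^ 2)), Q (i, x) (i, y) = 0)
    (hQR : ∀ p q, (2 : ℤ) ∣ R p q - Q p q)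
    (A : Matrix ((Fin t × Fin (4 * u ^ 2)) ⊕ (Fin t × Fin (4 * u ^ 2)))
      ((Fin t × Fin (4 * u ^ 2)) ⊕ (Fin t × Fin (4 * u ^ 2))) ℤ)
    (hA : (2 : ℤ) • A = Matrix.fromBlocks (R + Q) (R - Q) (R - Q) (R + Q)) :
    (∀ p q, A p q = 0 ∨ A p q = 1) ∧ A.IsSymm ∧ (∀ p, A p p = 0) ∧
    A * (Matrix.of fun _ _ => (1 : ℤ))
      = (4 * t * (u : ℤ) ^ 2 - 2 * ε * u) • (Matrix.of fun _ _ => (1 : ℤ)) ∧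
    A * A = (4 * t * (u : ℤ) ^ 2 - 2 * ε * u) • 1
        + (4 * (u : ℤ) ^ 2 - 2 * ε * u) •
          (Matrix.fromBlocks (1 : Matrix (Fin t × Fin (4 * u ^ 2)) (Fin t × Fin (4 * u ^ 2)) ℤ)
            1 1 1 - 1)
        + (2 * t * (u : ℤ) ^ 2 - 2 * ε * u) •
          ((Matrix.of fun _ _ => (1 : ℤ)) -
            Matrix.fromBlocks (1 : Matrix (Fin t × Fin (4 * u ^ 2)) (Fin t × Fin (4 * u ^ 2)) ℤ)
              1 1 1) ∧
    (4 * (u : ℤ) ^ 2 - 2 * ε * u) ≠ (2 * t * (u : ℤ) ^ 2 - 2 * ε * u) := by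
  have huz : (1:ℤ) ≤ (u:ℤ) := by exact_mod_cast hu
  have htz : (3:ℤ) ≤ (t:ℤ) := by exact_mod_cast ht
  -- row sums of H
  have haval : ∀ i, a i = -(2 * ε * u) := by
    intro i; linear_combination -htype i
  have hHsym : ∀ i x y, H i x y = H i y x := fun i x y => (hsymm i).apply y x
  have hcol : ∀ i y, ∑ x, H i x y = a i := by
    intro i y
    rw [show (∑ x, H i x y) = ∑ x, H i y x from Finset.sum_congr rfl fun x _ => hHsym i x y,
      hrow]
  -- pointwise form of R
  have hR' : ∀ p q : Fin t × Fin (4 * u ^ 2),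
      R p q = (if p.1 = q.1 then H p.1 p.2 q.2 else 0) + 1 := by
    intro p q; rw [hR]; split <;> ring
  have hRsym : ∀ p q, R p q = R q p := by
    intro p q
    obtain ⟨i, x⟩ := p; obtain ⟨j, y⟩ := q
    rw [hR, hR]
    rcases eq_or_ne i j with h | h
    · subst h; simp only [if_pos rfl]; rw [hHsym]
    · simp only [if_neg h, if_neg (Ne.symm h)]
  have hQsym : ∀ p q, Q p q = Q q p := fun p q => hQsymm.apply q p
  -- row sums of R
  have hRrow : ∀ p : Fin t × Fin (4 * u ^ 2), ∑ q, R p q = 4 * t * (u:ℤ) ^ 2 - 2 * ε * u := by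
    intro p
    simp only [hR']
    rw [Fintype.sum_prod_type]
    have step : ∀ j, (∑ y, ((if p.1 = j then H p.1 p.2 y else 0) + 1))
        = (if p.1 = j then a p.1 else 0) + ((4 * u ^ 2 : ℕ) : ℤ) := by
      intro j
      rw [Finset.sum_add_distrib]
      congr 1
      · split_ifs with h
        · exact hrow p.1 p.2
        · simp
      · simp
    simp_rw [step]
    rw [Finset.sum_add_distrib, Finset.sum_ite_eq]
    simp only [Finset.mem_univ, if_true, Finset.sum_const, Finset.card_univ, Fintype.card_fin,
      nsmul_eq_mul, haval]
    push_cast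
    ring
  -- the Hadamard product, pointwise
  have hHad' : ∀ i x y, ∑ z, H i x z * H i z y = if x = y then 4 * (u:ℤ) ^ 2 else 0 := by
    intro i x y
    have h := congrFun (congrFun (hHad i) x) y
    rw [Matrix.mul_apply] at h
    rw [h]
    simp only [Matrix.smul_apply, Matrix.one_apply, smul_eq_mul]
    split_ifs <;> push_cast <;> ring
  -- R * R
  have hRR : ∀ p q, (R * R) p q
      = (if p = q then 4 * (u:ℤ) ^ 2 else 0) + (4 * t * (u:ℤ) ^ 2 - 4 * ε * u) := by
    intro p q
    rw [Matrix.mul_apply]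
    simp only [hR']
    have expand : ∀ r : Fin t × Fin (4 * u ^ 2),
        ((if p.1 = r.1 then H p.1 p.2 r.2 else 0) + 1)
          * ((if r.1 = q.1 then H r.1 r.2 q.2 else 0) + 1)
        = (if p.1 = r.1 then H p.1 p.2 r.2 else 0) * (if r.1 = q.1 then H r.1 r.2 q.2 else 0)
          + (if p.1 = r.1 then H p.1 p.2 r.2 else 0)
          + (if r.1 = q.1 then H r.1 r.2 q.2 else 0) + 1 := fun r => by ring
    simp_rw [expand]
    rw [Finset.sum_add_distrib, Finset.sum_add_distrib, Finset.sum_add_distrib]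
    have S1 : (∑ r : Fin t × Fin (4 * u ^ 2),
        (if p.1 = r.1 then H p.1 p.2 r.2 else 0) * (if r.1 = q.1 then H r.1 r.2 q.2 else 0))
        = if p = q then 4 * (u:ℤ) ^ 2 else 0 := by
      rw [Fintype.sum_prod_type]
      have inner : ∀ j, (∑ z, (if p.1 = j then H p.1 p.2 z else 0)
            * (if j = q.1 then H j z q.2 else 0))
          = if p.1 = j then (if j = q.1 then ∑ z, H p.1 p.2 z * H j z q.2 else 0) else 0 := by
        intro j
        split_ifs with h1 h2 <;> simp
      simp_rw [inner]
      rw [Finset.sum_ite_eq]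
      simp only [Finset.mem_univ, if_true]
      rcases eq_or_ne p.1 q.1 with h | h
      · rw [if_pos h, hHad' p.1 p.2 q.2]
        rcases eq_or_ne p.2 q.2 with h2 | h2
        · rw [if_pos h2, if_pos (Prod.ext h h2)]
        · rw [if_neg h2, if_neg (fun hpq => h2 (congrArg Prod.snd hpq))]
      · rw [if_neg h, if_neg (fun hpq => h (congrArg Prod.fst hpq))]
    have S2 : (∑ r : Fin t × Fin (4 * u ^ 2), (if p.1 = r.1 then H p.1 p.2 r.2 else 0))
        = a p.1 := by
      rw [Fintype.sum_prod_type]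
      have inner : ∀ j, (∑ z, (if p.1 = j then H p.1 p.2 z else 0))
          = if p.1 = j then a p.1 else 0 := by
        intro j; split_ifs with h
        · exact hrow p.1 p.2
        · simp
      simp_rw [inner]
      rw [Finset.sum_ite_eq]
      simp
    have S3 : (∑ r : Fin t × Fin (4 * u ^ 2), (if r.1 = q.1 then H r.1 r.2 q.2 else 0))
        = a q.1 := by
      rw [Fintype.sum_prod_type]
      have inner : ∀ j, (∑ z, (if j = q.1 then H j z q.2 else 0))
          = if j = q.1 then a q.1 else 0 := by
        intro j; split_ifs with h
        · subst h; exact hcol q.1 q.2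
        · simp
      simp_rw [inner]
      rw [Finset.sum_ite_eq']
      simp
    rw [S1, S2, S3]
    simp only [Finset.sum_const, Finset.card_univ, Fintype.card_prod, Fintype.card_fin,
      nsmul_eq_mul, haval]
    push_cast
    ring
  -- matrix forms
  have hRRmat : R * R = (4 * (u:ℤ) ^ 2) •
        (1 : Matrix (Fin t × Fin (4 * u ^ 2)) (Fin t × Fin (4 * u ^ 2)) ℤ)
      + (4 * t * (u:ℤ) ^ 2 - 4 * ε * u) • (Matrix.of fun _ _ => (1:ℤ)) := by
    ext p q
    rw [hRR p q]
    simp only [Matrix.add_apply, Matrix.smul_apply, Matrix.one_apply, Matrix.of_apply,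
      smul_eq_mul]
    split_ifs <;> ring
  have hQ2 : Q * Q = (4 * (u:ℤ) ^ 2 * ((t:ℤ) - 1)) •
      (1 : Matrix (Fin t × Fin (4 * u ^ 2)) (Fin t × Fin (4 * u ^ 2)) ℤ) := by
    have h := hQw
    rw [hQsymm.eq] at h
    rw [h]
    congr 1
    push_cast [Nat.cast_sub (show 1 ≤ t by omega)]
    ring
  -- entries of the blocks
  have hblk : ∀ p q : Fin t × Fin (4 * u ^ 2),
      (R p q + Q p q = 0 ∨ R p q + Q p q = 2) ∧ (R p q - Q p q = 0 ∨ R p q - Q p q = 2) := by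
    intro p q
    rcases eq_or_ne p.1 q.1 with h | h
    · have hQ0 : Q p q = 0 := by
        obtain ⟨i, x⟩ := p; obtain ⟨j, y⟩ := q
        dsimp at h; subst h; exact hQblocks i x y
      have hRv : R p q = 0 ∨ R p q = 2 := by
        rw [hR, if_pos h]
        rcases hent p.1 p.2 q.2 with h1 | h1 <;> rw [h1] <;> norm_num
      rcases hRv with h1 | h1 <;> rw [h1, hQ0] <;> norm_num
    · have hRv : R p q = 1 := by rw [hR, if_neg h]
      have hQv : Q p q = 1 ∨ Q p q = -1 := by
        rcases hQent p q with h0 | h1 | h1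
        · exfalso; have hd := hQR p q; rw [hRv, h0] at hd; omega
        · left; exact h1
        · right; exact h1
      rcases hQv with h1 | h1 <;> rw [hRv, h1] <;> norm_num
  -- pointwise 2 * A
  have h2A : ∀ x y, (2:ℤ) * A x y
      = Matrix.fromBlocks (R + Q) (R - Q) (R - Q) (R + Q) x y := by
    intro x y
    have h := congrFun (congrFun hA x) y
    simpa using h
  refine ⟨?_, ?_, ?_, ?_, ?_, ?_⟩
  · -- entries 0 or 1
    intro x y
    have h := h2A x y
    rcases x with p | p <;> rcases y with q | q <;>
      simp only [Matrix.fromBlocks_apply₁₁, Matrix.fromBlocks_apply₁₂,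
        Matrix.fromBlocks_apply₂₁, Matrix.fromBlocks_apply₂₂, Matrix.add_apply,
        Matrix.sub_apply] at h <;>
      [rcases (hblk p q).1 with h1 | h1; rcases (hblk p q).2 with h1 | h1;
       rcases (hblk p q).2 with h1 | h1; rcases (hblk p q).1 with h1 | h1] <;> omega
  · -- symmetry
    apply Matrix.IsSymm.ext
    intro x y
    have h1 := h2A x y
    have h2 := h2A y x
    rcases x with p | p <;> rcases y with q | q <;>
      simp only [Matrix.fromBlocks_apply₁₁, Matrix.fromBlocks_apply₁₂,
        Matrix.fromBlocks_apply₂₁, Matrix.fromBlocks_apply₂₂, Matrix.add_apply,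
        Matrix.sub_apply] at h1 h2 <;>
      rw [hRsym p q, hQsym p q] at h1 <;> omega
  · -- zero diagonal
    intro x
    have h := h2A x x
    have hRd : ∀ p : Fin t × Fin (4 * u ^ 2), R p p + Q p p = 0 := by
      intro p
      obtain ⟨i, z⟩ := p
      rw [hR, hQblocks i z z]
      simp [hdiag]
    rcases x with p | p <;>
      simp only [Matrix.fromBlocks_apply₁₁, Matrix.fromBlocks_apply₂₂,
        Matrix.add_apply] at h <;> rw [hRd p] at h <;> omega
  · -- row sums
    apply mat_smul_cancel (show (2:ℤ) ≠ 0 by norm_num)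
    rw [← smul_mul_assoc, hA]
    ext x y
    have key : ∀ p, (∑ r, (R p r + Q p r)) + (∑ r, (R p r - Q p r))
        = 2 * (4 * t * (u:ℤ) ^ 2 - 2 * ε * u) := by
      intro p
      rw [← Finset.sum_add_distrib]
      have e : ∀ r, (R p r + Q p r) + (R p r - Q p r) = 2 * R p r := fun r => by ring
      simp_rw [e]
      rw [← Finset.mul_sum, hRrow p]
    rcases x with p | p <;> rcases y with q | q <;>
      simp only [Matrix.mul_apply, Fintype.sum_sum_type, Matrix.fromBlocks_apply₁₁,
        Matrix.fromBlocks_apply₁₂, Matrix.fromBlocks_apply₂₁, Matrix.fromBlocks_apply₂₂,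
        Matrix.add_apply, Matrix.sub_apply,
        Matrix.of_apply, mul_one, Matrix.smul_apply, smul_eq_mul] <;>
      linarith [key p]
  · -- A * A
    apply mat_smul_cancel (show (4:ℤ) ≠ 0 by norm_num)
    have h4 : (4:ℤ) • (A * A) = ((2:ℤ) • A) * ((2:ℤ) • A) := by
      rw [smul_mul_smul_comm]; norm_num
    rw [h4, hA, Matrix.fromBlocks_multiply]
    have E1 : (R + Q) * (R + Q) + (R - Q) * (R - Q) = R * R + Q * Q + (R * R + Q * Q) := by
      noncomm_ring
    have E1' : (R - Q) * (R - Q) + (R + Q) * (R + Q) = R * R + Q * Q + (R * R + Q * Q) := by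
      noncomm_ring
    have E2 : (R + Q) * (R - Q) + (R - Q) * (R + Q) = (R * R - Q * Q) + (R * R - Q * Q) := by
      noncomm_ring
    have E2' : (R - Q) * (R + Q) + (R + Q) * (R - Q) = (R * R - Q * Q) + (R * R - Q * Q) := by
      noncomm_ring
    rw [E1, E1', E2, E2', hRRmat, hQ2]
    ext x y
    rcases x with p | p <;> rcases y with q | q <;>
      simp only [Matrix.fromBlocks_apply₁₁, Matrix.fromBlocks_apply₁₂,
        Matrix.fromBlocks_apply₂₁, Matrix.fromBlocks_apply₂₂, Matrix.add_apply,
        Matrix.sub_apply, Matrix.smul_apply, Matrix.one_apply, Matrix.of_apply,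
        smul_eq_mul, Sum.inl.injEq, Sum.inr.injEq,
        Matrix.zero_apply, reduceCtorEq, if_false] <;>
      split_ifs <;> first | ring | (exfalso; simp_all)
  · -- λ₁ ≠ λ₂
    intro h
    have : 4 * (u:ℤ) ^ 2 = 2 * t * (u:ℤ) ^ 2 := by linarith
    nlinarith [sq_nonneg ((u:ℤ) - 1)]
end
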